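/- arXiv:1111.3253 — 11 statements merged into one kernel-verified Lean document; each statement's English description precedes it below -/
import Mathlib

section
/- For every bilinear form T : ℝ² × ℝ² → ℝ (with ℝ² carrying the sup norm) satisfying the Littlewood 4/3 inequality (Σ_{i,j=1}^{2} |T(e_i,e_j)|^{4/3})^{3/4} ≤ C·‖T‖, applied to T₂(x,y) = x₁y₁ + x₁y₂ + x₂y₁ − x₂y₂, the constant C must satisfy C ≥ √2. -/
/-- If the Littlewood 4/3 inequality with constant `C` holds for the bilinear form
`T₂(x,y) = x₁y₁ + x₁y₂ + x₂y₁ − x₂y₂` on `ℝ²` with sup norm, then `C ≥ √2`. -/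
theorem stmt_2 (C : ℝ)
    (T : ContinuousMultilinearMap ℝ (fun _ : Fin 2 => (Fin 2 → ℝ)) ℝ)
    (hT : ∀ x y : Fin 2 → ℝ,
      T ![x, y] = x 0 * y 0 + x 0 * y 1 + x 1 * y 0 - x 1 * y 1)
    (hC : (∑ i : Fin 2, ∑ j : Fin 2,
        |T ![Pi.single i (1 : ℝ), Pi.single j (1 : ℝ)]| ^ ((4 : ℝ) / 3)) ^ ((3 : ℝ) / 4)
      ≤ C * ‖T‖) :
    Real.sqrt 2 ≤ C := by
  -- norm bound: ‖T‖ ≤ 2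
  have key : ∀ (a b c d X Y : ℝ), |a| ≤ X → |b| ≤ X → |c| ≤ Y → |d| ≤ Y →
      |a*c+a*d+b*c-b*d| ≤ 2*(X*Y) := by
    intro a b c d X Y ha hb hc hd
    have hX : 0 ≤ X := le_trans (abs_nonneg a) ha
    calc |a*c+a*d+b*c-b*d| = |a*(c+d)+b*(c-d)| := by ring_nf
      _ ≤ |a*(c+d)| + |b*(c-d)| := abs_add_le _ _
      _ = |a| * |c+d| + |b| * |c-d| := by rw [abs_mul, abs_mul]
      _ ≤ X * |c+d| + X * |c-d| := by
          gcongr <;> first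
            | assumption
            | exact abs_nonneg _
      _ = X * (|c+d| + |c-d|) := by ring
      _ ≤ X * (2*Y) := by
          have h2 : |c+d| + |c-d| ≤ 2*Y := by
            rw [abs_le] at hc hd
            rcases abs_cases (c+d) with ⟨h1,_⟩|⟨h1,_⟩ <;>
              rcases abs_cases (c-d) with ⟨h3,_⟩|⟨h3,_⟩ <;> linarith
          exact mul_le_mul_of_nonneg_left h2 hX
      _ = 2 * (X*Y) := by ring
  have hnorm : ‖T‖ ≤ 2 := by
    apply ContinuousMultilinearMap.opNorm_le_bound (f := T) (by norm_num)
    intro m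
    have hm : m = ![m 0, m 1] := by
      funext i; fin_cases i <;> rfl
    rw [hm, hT]
    rw [Fin.prod_univ_two, Real.norm_eq_abs]
    simp only [Matrix.cons_val_zero, Matrix.cons_val_one, Matrix.head_cons]
    exact key _ _ _ _ _ _
      (by simpa [Real.norm_eq_abs] using norm_le_pi_norm (m 0) 0)
      (by simpa [Real.norm_eq_abs] using norm_le_pi_norm (m 0) 1)
      (by simpa [Real.norm_eq_abs] using norm_le_pi_norm (m 1) 0)
      (by simpa [Real.norm_eq_abs] using norm_le_pi_norm (m 1) 1)
  -- compute the LHS sum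
  have h00 : T ![Pi.single (0:Fin 2) (1:ℝ), Pi.single 0 1] = 1 := by
    rw [hT]; simp
  have h01 : T ![Pi.single (0:Fin 2) (1:ℝ), Pi.single 1 1] = 1 := by
    rw [hT]; simp
  have h10 : T ![Pi.single (1:Fin 2) (1:ℝ), Pi.single 0 1] = 1 := by
    rw [hT]; simp
  have h11 : T ![Pi.single (1:Fin 2) (1:ℝ), Pi.single 1 1] = -1 := by
    rw [hT]; simp
  have hsum : (∑ i : Fin 2, ∑ j : Fin 2,
        |T ![Pi.single i (1 : ℝ), Pi.single j (1 : ℝ)]| ^ ((4 : ℝ) / 3)) = 4 := by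
    rw [Fin.sum_univ_two, Fin.sum_univ_two, Fin.sum_univ_two, h00, h01, h10, h11]
    norm_num
  rw [hsum] at hC
  have h4 : (4 : ℝ) ^ ((3:ℝ)/4) = 2 * Real.sqrt 2 := by
    have hb : (4:ℝ) = (2:ℝ)^(2:ℝ) := by
      norm_num
    calc (4:ℝ)^((3:ℝ)/4) = ((2:ℝ)^(2:ℝ))^((3:ℝ)/4) := by rw [← hb]
      _ = (2:ℝ)^((2:ℝ)*((3:ℝ)/4)) := by rw [← Real.rpow_mul (by norm_num)]
      _ = (2:ℝ)^(1 + (1:ℝ)/2) := by norm_num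
      _ = 2 * Real.sqrt 2 := by
          rw [Real.rpow_add (by norm_num), Real.rpow_one, Real.sqrt_eq_rpow]
  rw [h4] at hC
  have hTn : (0:ℝ) ≤ ‖T‖ := norm_nonneg T
  have hs2 : 0 < Real.sqrt 2 := by positivity
  have hCpos : 0 < C := by nlinarith
  nlinarith [mul_le_mul_of_nonneg_left hnorm hCpos.le]
end

section
/- The trilinear form T₃ : ℝ⁴ × ℝ⁴ × ℝ⁴ → ℝ defined by T₃(x,y,z) = (z₁+z₂)(x₁y₁ + x₁y₂ + x₂y₁ − x₂y₂) + (z₁−z₂)(x₃y₃ + x₃y₄ + x₄y₃ − x₄y₄) has operator norm exactly 4 with respect to the sup norm on ℝ⁴. -/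
private lemma aux2 (x0 x1 y0 y1 : ℝ) (hx0 : |x0| ≤ 1) (hx1 : |x1| ≤ 1)
    (hy0 : |y0| ≤ 1) (hy1 : |y1| ≤ 1) :
    |x0 * y0 + x0 * y1 + x1 * y0 - x1 * y1| ≤ 2 := by
  have h : |x0 * y0 + x0 * y1 + x1 * y0 - x1 * y1| ≤ |x0| * |y0 + y1| + |x1| * |y0 - y1| := by
    calc |x0 * y0 + x0 * y1 + x1 * y0 - x1 * y1|
        = |x0 * (y0 + y1) + x1 * (y0 - y1)| := by ring_nf
      _ ≤ |x0 * (y0 + y1)| + |x1 * (y0 - y1)| := abs_add_le _ _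
      _ = |x0| * |y0 + y1| + |x1| * |y0 - y1| := by rw [abs_mul, abs_mul]
  have h2 : |y0 + y1| + |y0 - y1| ≤ 2 := by
    rcases abs_cases (y0 + y1) with ⟨e1, _⟩ | ⟨e1, _⟩ <;>
    rcases abs_cases (y0 - y1) with ⟨e2, _⟩ | ⟨e2, _⟩ <;>
    rcases abs_cases y0 with ⟨f, _⟩ | ⟨f, _⟩ <;>
    rcases abs_cases y1 with ⟨g, _⟩ | ⟨g, _⟩ <;> linarith
  have k1 : |x0| * |y0 + y1| ≤ 1 * |y0 + y1| := mul_le_mul_of_nonneg_right hx0 (abs_nonneg _)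
  have k2 : |x1| * |y0 - y1| ≤ 1 * |y0 - y1| := mul_le_mul_of_nonneg_right hx1 (abs_nonneg _)
  linarith

/-- The trilinear form `T₃` on `ℝ⁴` (sup norm) has operator norm exactly 4. -/
theorem stmt_3 :
    sSup {r : ℝ | ∃ x y z : Fin 4 → ℝ, ‖x‖ ≤ 1 ∧ ‖y‖ ≤ 1 ∧ ‖z‖ ≤ 1 ∧
      r = |(z 0 + z 1) * (x 0 * y 0 + x 0 * y 1 + x 1 * y 0 - x 1 * y 1)
         + (z 0 - z 1) * (x 2 * y 2 + x 2 * y 3 + x 3 * y 2 - x 3 * y 3)|} = 4 := by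
  apply le_antisymm
  · apply Real.sSup_le _ (by norm_num)
    rintro r ⟨x, y, z, hx, hy, hz, rfl⟩
    have hb : ∀ (v : Fin 4 → ℝ), ‖v‖ ≤ 1 → ∀ i, |v i| ≤ 1 := by
      intro v hv i
      calc |v i| = ‖v i‖ := rfl
        _ ≤ ‖v‖ := norm_le_pi_norm v i
        _ ≤ 1 := hv
    have hA := aux2 (x 0) (x 1) (y 0) (y 1) (hb x hx 0) (hb x hx 1) (hb y hy 0) (hb y hy 1)
    have hB := aux2 (x 2) (x 3) (y 2) (y 3) (hb x hx 2) (hb x hx 3) (hb y hy 2) (hb y hy 3)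
    have hz0 := hb z hz 0
    have hz1 := hb z hz 1
    set A := x 0 * y 0 + x 0 * y 1 + x 1 * y 0 - x 1 * y 1 with hAdef
    set B := x 2 * y 2 + x 2 * y 3 + x 3 * y 2 - x 3 * y 3 with hBdef
    have h : |(z 0 + z 1) * A + (z 0 - z 1) * B| ≤ |z 0 + z 1| * |A| + |z 0 - z 1| * |B| := by
      calc |(z 0 + z 1) * A + (z 0 - z 1) * B| ≤ |(z 0 + z 1) * A| + |(z 0 - z 1) * B| :=
            abs_add_le _ _
        _ = |z 0 + z 1| * |A| + |z 0 - z 1| * |B| := by rw [abs_mul, abs_mul]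
    have h2 : |z 0 + z 1| + |z 0 - z 1| ≤ 2 := by
      rcases abs_cases (z 0 + z 1) with ⟨e1, _⟩ | ⟨e1, _⟩ <;>
      rcases abs_cases (z 0 - z 1) with ⟨e2, _⟩ | ⟨e2, _⟩ <;>
      rcases abs_cases (z 0) with ⟨f, _⟩ | ⟨f, _⟩ <;>
      rcases abs_cases (z 1) with ⟨g, _⟩ | ⟨g, _⟩ <;> linarith
    have k1 : |z 0 + z 1| * |A| ≤ |z 0 + z 1| * 2 := mul_le_mul_of_nonneg_left hA (abs_nonneg _)
    have k2 : |z 0 - z 1| * |B| ≤ |z 0 - z 1| * 2 := mul_le_mul_of_nonneg_left hB (abs_nonneg _)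
    linarith
  · apply le_csSup
    · refine ⟨4, ?_⟩
      rintro r ⟨x, y, z, hx, hy, hz, rfl⟩
      have hb : ∀ (v : Fin 4 → ℝ), ‖v‖ ≤ 1 → ∀ i, |v i| ≤ 1 := by
        intro v hv i
        calc |v i| = ‖v i‖ := rfl
          _ ≤ ‖v‖ := norm_le_pi_norm v i
          _ ≤ 1 := hv
      have hA := aux2 (x 0) (x 1) (y 0) (y 1) (hb x hx 0) (hb x hx 1) (hb y hy 0) (hb y hy 1)
      have hB := aux2 (x 2) (x 3) (y 2) (y 3) (hb x hx 2) (hb x hx 3) (hb y hy 2) (hb y hy 3)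
      have hz0 := hb z hz 0
      have hz1 := hb z hz 1
      set A := x 0 * y 0 + x 0 * y 1 + x 1 * y 0 - x 1 * y 1
      set B := x 2 * y 2 + x 2 * y 3 + x 3 * y 2 - x 3 * y 3
      have h : |(z 0 + z 1) * A + (z 0 - z 1) * B| ≤ |z 0 + z 1| * |A| + |z 0 - z 1| * |B| := by
        calc |(z 0 + z 1) * A + (z 0 - z 1) * B| ≤ |(z 0 + z 1) * A| + |(z 0 - z 1) * B| :=
              abs_add_le _ _
          _ = |z 0 + z 1| * |A| + |z 0 - z 1| * |B| := by rw [abs_mul, abs_mul]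
      have h2 : |z 0 + z 1| + |z 0 - z 1| ≤ 2 := by
        rcases abs_cases (z 0 + z 1) with ⟨e1, _⟩ | ⟨e1, _⟩ <;>
        rcases abs_cases (z 0 - z 1) with ⟨e2, _⟩ | ⟨e2, _⟩ <;>
        rcases abs_cases (z 0) with ⟨f, _⟩ | ⟨f, _⟩ <;>
        rcases abs_cases (z 1) with ⟨g, _⟩ | ⟨g, _⟩ <;> linarith
      have k1 : |z 0 + z 1| * |A| ≤ |z 0 + z 1| * 2 := mul_le_mul_of_nonneg_left hA (abs_nonneg _)
      have k2 : |z 0 - z 1| * |B| ≤ |z 0 - z 1| * 2 := mul_le_mul_of_nonneg_left hB (abs_nonneg _)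
      linarith
    · refine ⟨![1,1,1,1], ![1,1,1,1], ![1,0,0,0], ?_, ?_, ?_, ?_⟩
      · rw [pi_norm_le_iff_of_nonneg (by norm_num)]
        intro i; fin_cases i <;> simp
      · rw [pi_norm_le_iff_of_nonneg (by norm_num)]
        intro i; fin_cases i <;> simp
      · rw [pi_norm_le_iff_of_nonneg (by norm_num)]
        intro i; fin_cases i <;> simp
      · norm_num [show (![1,1,1,1] : Fin 4 → ℝ) 2 = 1 from rfl, show (![1,1,1,1] : Fin 4 → ℝ) 3 = 1 from rfl]
end

section
/- If C₃ is a constant such that (Σ_{i,j,k=1}^{4} |T(e_i,e_j,e_k)|^{3/2})^{2/3} ≤ C₃·‖T‖ holds for the trilinear form T₃(x,y,z) = (z₁+z₂)(x₁y₁+x₁y₂+x₂y₁−x₂y₂) + (z₁−z₂)(x₃y₃+x₃y₄+x₄y₃−x₄y₄) on ℝ⁴ (sup norm), then C₃ ≥ 2^{2/3}. -/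
/-- If the `m = 3` Bohnenblust–Hille inequality with constant `C` holds for the
trilinear form `T₃` on `ℝ⁴` with sup norm, then `C ≥ 2^(2/3)`. -/
theorem stmt_4 (C : ℝ)
    (T : ContinuousMultilinearMap ℝ (fun _ : Fin 3 => (Fin 4 → ℝ)) ℝ)
    (hT : ∀ x y z : Fin 4 → ℝ,
      T ![x, y, z] = (z 0 + z 1) * (x 0 * y 0 + x 0 * y 1 + x 1 * y 0 - x 1 * y 1)
        + (z 0 - z 1) * (x 2 * y 2 + x 2 * y 3 + x 3 * y 2 - x 3 * y 3))
    (hC : (∑ i : Fin 4, ∑ j : Fin 4, ∑ k : Fin 4,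
        |T ![Pi.single i (1 : ℝ), Pi.single j (1 : ℝ), Pi.single k (1 : ℝ)]|
          ^ ((3 : ℝ) / 2)) ^ ((2 : ℝ) / 3)
      ≤ C * ‖T‖) :
    (2 : ℝ) ^ ((2 : ℝ) / 3) ≤ C := by
  have key : ∀ a b M : ℝ, |a| ≤ M → |b| ≤ M → |a+b| + |a-b| ≤ 2*M := by
    intro a b M ha hb
    rw [abs_le] at ha hb
    rcases abs_cases (a+b) with ⟨h1,_⟩|⟨h1,_⟩ <;>
      rcases abs_cases (a-b) with ⟨h2,_⟩|⟨h2,_⟩ <;> linarith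
  -- bound on the form
  have hb : ∀ x y z : Fin 4 → ℝ, ‖T ![x, y, z]‖ ≤ 4 * (‖x‖ * ‖y‖ * ‖z‖) := by
    intro x y z
    rw [hT, Real.norm_eq_abs]
    have hx : ∀ i, |x i| ≤ ‖x‖ := fun i => by
      simpa [Real.norm_eq_abs] using norm_le_pi_norm x i
    have hy : ∀ i, |y i| ≤ ‖y‖ := fun i => by
      simpa [Real.norm_eq_abs] using norm_le_pi_norm y i
    have hz : ∀ i, |z i| ≤ ‖z‖ := fun i => by
      simpa [Real.norm_eq_abs] using norm_le_pi_norm z i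
    have hy1 := key (y 0) (y 1) ‖y‖ (hy 0) (hy 1)
    have hy2 := key (y 2) (y 3) ‖y‖ (hy 2) (hy 3)
    have hz1 := key (z 0) (z 1) ‖z‖ (hz 0) (hz 1)
    have hA : |x 0 * y 0 + x 0 * y 1 + x 1 * y 0 - x 1 * y 1| ≤ 2 * (‖x‖ * ‖y‖) := by
      have e : x 0 * y 0 + x 0 * y 1 + x 1 * y 0 - x 1 * y 1
          = x 0 * (y 0 + y 1) + x 1 * (y 0 - y 1) := by ring
      rw [e]
      calc |x 0 * (y 0 + y 1) + x 1 * (y 0 - y 1)|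
          ≤ |x 0 * (y 0 + y 1)| + |x 1 * (y 0 - y 1)| := abs_add_le _ _
        _ = |x 0| * |y 0 + y 1| + |x 1| * |y 0 - y 1| := by rw [abs_mul, abs_mul]
        _ ≤ 2 * (‖x‖ * ‖y‖) := by
            nlinarith [hx 0, hx 1, abs_nonneg (y 0 + y 1), abs_nonneg (y 0 - y 1),
              norm_nonneg x, norm_nonneg y, abs_nonneg (x 0), abs_nonneg (x 1)]
    have hB : |x 2 * y 2 + x 2 * y 3 + x 3 * y 2 - x 3 * y 3| ≤ 2 * (‖x‖ * ‖y‖) := by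
      have e : x 2 * y 2 + x 2 * y 3 + x 3 * y 2 - x 3 * y 3
          = x 2 * (y 2 + y 3) + x 3 * (y 2 - y 3) := by ring
      rw [e]
      calc |x 2 * (y 2 + y 3) + x 3 * (y 2 - y 3)|
          ≤ |x 2 * (y 2 + y 3)| + |x 3 * (y 2 - y 3)| := abs_add_le _ _
        _ = |x 2| * |y 2 + y 3| + |x 3| * |y 2 - y 3| := by rw [abs_mul, abs_mul]
        _ ≤ 2 * (‖x‖ * ‖y‖) := by
            nlinarith [hx 2, hx 3, abs_nonneg (y 2 + y 3), abs_nonneg (y 2 - y 3),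
              norm_nonneg x, norm_nonneg y, abs_nonneg (x 2), abs_nonneg (x 3)]
    calc |(z 0 + z 1) * (x 0 * y 0 + x 0 * y 1 + x 1 * y 0 - x 1 * y 1)
          + (z 0 - z 1) * (x 2 * y 2 + x 2 * y 3 + x 3 * y 2 - x 3 * y 3)|
        ≤ |z 0 + z 1| * |x 0 * y 0 + x 0 * y 1 + x 1 * y 0 - x 1 * y 1|
          + |z 0 - z 1| * |x 2 * y 2 + x 2 * y 3 + x 3 * y 2 - x 3 * y 3| := by
          refine le_trans (abs_add_le _ _) ?_
          rw [abs_mul, abs_mul]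
      _ ≤ 4 * (‖x‖ * ‖y‖ * ‖z‖) := by
          nlinarith [abs_nonneg (z 0 + z 1), abs_nonneg (z 0 - z 1),
            norm_nonneg x, norm_nonneg y, norm_nonneg z, hA, hB, hz1,
            abs_nonneg (x 0 * y 0 + x 0 * y 1 + x 1 * y 0 - x 1 * y 1),
            abs_nonneg (x 2 * y 2 + x 2 * y 3 + x 3 * y 2 - x 3 * y 3),
            mul_nonneg (norm_nonneg x) (norm_nonneg y)]
  have hnorm : ‖T‖ ≤ 4 := by
    refine T.opNorm_le_bound (by norm_num) fun m => ?_
    have hm : m = ![m 0, m 1, m 2] := by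
      funext i; fin_cases i <;> rfl
    calc ‖T m‖ = ‖T ![m 0, m 1, m 2]‖ := by rw [← hm]
      _ ≤ 4 * (‖m 0‖ * ‖m 1‖ * ‖m 2‖) := hb _ _ _
      _ = 4 * ∏ i, ‖m i‖ := by rw [Fin.prod_univ_three]
  have hsum : (∑ i : Fin 4, ∑ j : Fin 4, ∑ k : Fin 4,
      |T ![Pi.single i (1 : ℝ), Pi.single j (1 : ℝ), Pi.single k (1 : ℝ)]|
        ^ ((3 : ℝ) / 2)) = 16 := by
    simp only [hT, Fin.sum_univ_four, Pi.single_apply]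
    norm_num [show (0:Fin 4) ≠ 1 by decide, show (0:Fin 4) ≠ 2 by decide,
      show (0:Fin 4) ≠ 3 by decide, show (1:Fin 4) ≠ 0 by decide,
      show (1:Fin 4) ≠ 2 by decide, show (1:Fin 4) ≠ 3 by decide,
      show (2:Fin 4) ≠ 0 by decide, show (2:Fin 4) ≠ 1 by decide,
      show (2:Fin 4) ≠ 3 by decide, show (3:Fin 4) ≠ 0 by decide,
      show (3:Fin 4) ≠ 1 by decide, show (3:Fin 4) ≠ 2 by decide,
      Real.zero_rpow, Real.one_rpow]
  rw [hsum] at hC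
  have hCpos : 0 ≤ C := by
    by_contra h
    push_neg at h
    have h1 : (0:ℝ) < (16:ℝ) ^ ((2:ℝ)/3) := Real.rpow_pos_of_pos (by norm_num) _
    nlinarith [norm_nonneg T]
  have h16 : (16:ℝ) ^ ((2:ℝ)/3) = 4 * 2 ^ ((2:ℝ)/3) := by
    have h2 : (16:ℝ) = (2:ℝ) ^ (4:ℝ) := by
      rw [show (4:ℝ) = ((4:ℕ):ℝ) by norm_num, Real.rpow_natCast]; norm_num
    rw [h2, ← Real.rpow_mul (by norm_num), show (4:ℝ) * ((2:ℝ)/3) = 2 + (2:ℝ)/3 by norm_num,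
      Real.rpow_add (by norm_num), show ((2:ℝ):ℝ) ^ (2:ℝ) = 4 by
        rw [show (2:ℝ) = ((2:ℕ):ℝ) by norm_num, Real.rpow_natCast]; norm_num]
  rw [h16] at hC
  nlinarith [hC, hnorm, hCpos]
end

section
/- The 4-linear form T₄ : (ℝ⁸)⁴ → ℝ defined by T₄(x,y,z,w) = (w₁+w₂)[(z₁+z₂)(x₁y₁+x₁y₂+x₂y₁−x₂y₂) + (z₁−z₂)(x₃y₃+x₃y₄+x₄y₃−x₄y₄)] + (w₁−w₂)[(z₃+z₄)(x₅y₅+x₅y₆+x₆y₅−x₆y₆) + (z₃−z₄)(x₇y₇+x₇y₈+x₈y₇−x₈y₈)] has operator norm exactly 8 with respect to the sup norm on ℝ⁸. -/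
private lemma bil_bound {a b c d : ℝ} (ha : |a| ≤ 1) (hb : |b| ≤ 1)
    (hc : |c| ≤ 1) (hd : |d| ≤ 1) : |a * c + a * d + b * c - b * d| ≤ 2 := by
  rw [abs_le] at *
  constructor <;> nlinarith [mul_nonneg (by linarith : (0:ℝ) ≤ 1 - a) (by linarith : (0:ℝ) ≤ 1 - c),
    mul_nonneg (by linarith : (0:ℝ) ≤ 1 - a) (by linarith : (0:ℝ) ≤ 1 + c),
    mul_nonneg (by linarith : (0:ℝ) ≤ 1 + a) (by linarith : (0:ℝ) ≤ 1 - c),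
    mul_nonneg (by linarith : (0:ℝ) ≤ 1 + a) (by linarith : (0:ℝ) ≤ 1 + c),
    mul_nonneg (by linarith : (0:ℝ) ≤ 1 - b) (by linarith : (0:ℝ) ≤ 1 - d),
    mul_nonneg (by linarith : (0:ℝ) ≤ 1 - b) (by linarith : (0:ℝ) ≤ 1 + d),
    mul_nonneg (by linarith : (0:ℝ) ≤ 1 + b) (by linarith : (0:ℝ) ≤ 1 - d),
    mul_nonneg (by linarith : (0:ℝ) ≤ 1 + b) (by linarith : (0:ℝ) ≤ 1 + d),
    mul_nonneg (by linarith : (0:ℝ) ≤ 1 - a) (by linarith : (0:ℝ) ≤ 1 - d),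
    mul_nonneg (by linarith : (0:ℝ) ≤ 1 + a) (by linarith : (0:ℝ) ≤ 1 + d),
    mul_nonneg (by linarith : (0:ℝ) ≤ 1 - b) (by linarith : (0:ℝ) ≤ 1 - c),
    mul_nonneg (by linarith : (0:ℝ) ≤ 1 + b) (by linarith : (0:ℝ) ≤ 1 + c)]

private lemma comb_bound {a b A B M : ℝ} (ha : |a| ≤ 1) (hb : |b| ≤ 1)
    (hA : |A| ≤ M) (hB : |B| ≤ M) : |(a + b) * A + (a - b) * B| ≤ 2 * M := by
  rw [abs_le] at *
  constructor <;> nlinarith [mul_nonneg (by linarith : (0:ℝ) ≤ 1 - a) (by linarith : (0:ℝ) ≤ M - A),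
    mul_nonneg (by linarith : (0:ℝ) ≤ 1 - a) (by linarith : (0:ℝ) ≤ M + A),
    mul_nonneg (by linarith : (0:ℝ) ≤ 1 + a) (by linarith : (0:ℝ) ≤ M - A),
    mul_nonneg (by linarith : (0:ℝ) ≤ 1 + a) (by linarith : (0:ℝ) ≤ M + A),
    mul_nonneg (by linarith : (0:ℝ) ≤ 1 - b) (by linarith : (0:ℝ) ≤ M - B),
    mul_nonneg (by linarith : (0:ℝ) ≤ 1 - b) (by linarith : (0:ℝ) ≤ M + B),
    mul_nonneg (by linarith : (0:ℝ) ≤ 1 + b) (by linarith : (0:ℝ) ≤ M - B),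
    mul_nonneg (by linarith : (0:ℝ) ≤ 1 + b) (by linarith : (0:ℝ) ≤ M + B)]

/-- The 4-linear form `T₄` on `ℝ⁸` (sup norm) has operator norm exactly 8. -/
theorem stmt_6 :
    sSup {r : ℝ | ∃ x y z w : Fin 8 → ℝ, ‖x‖ ≤ 1 ∧ ‖y‖ ≤ 1 ∧ ‖z‖ ≤ 1 ∧ ‖w‖ ≤ 1 ∧
      r = |(w 0 + w 1) *
            ((z 0 + z 1) * (x 0 * y 0 + x 0 * y 1 + x 1 * y 0 - x 1 * y 1)
              + (z 0 - z 1) * (x 2 * y 2 + x 2 * y 3 + x 3 * y 2 - x 3 * y 3))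
         + (w 0 - w 1) *
            ((z 2 + z 3) * (x 4 * y 4 + x 4 * y 5 + x 5 * y 4 - x 5 * y 5)
              + (z 2 - z 3) * (x 6 * y 6 + x 6 * y 7 + x 7 * y 6 - x 7 * y 7))|} = 8 := by
  have hub : ∀ r ∈ {r : ℝ | ∃ x y z w : Fin 8 → ℝ, ‖x‖ ≤ 1 ∧ ‖y‖ ≤ 1 ∧ ‖z‖ ≤ 1 ∧ ‖w‖ ≤ 1 ∧
      r = |(w 0 + w 1) *
            ((z 0 + z 1) * (x 0 * y 0 + x 0 * y 1 + x 1 * y 0 - x 1 * y 1)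
              + (z 0 - z 1) * (x 2 * y 2 + x 2 * y 3 + x 3 * y 2 - x 3 * y 3))
         + (w 0 - w 1) *
            ((z 2 + z 3) * (x 4 * y 4 + x 4 * y 5 + x 5 * y 4 - x 5 * y 5)
              + (z 2 - z 3) * (x 6 * y 6 + x 6 * y 7 + x 7 * y 6 - x 7 * y 7))|}, r ≤ 8 := by
    rintro r ⟨x, y, z, w, hx, hy, hz, hw, rfl⟩
    have bx : ∀ i, |x i| ≤ 1 := fun i => le_trans (by
      rw [← Real.norm_eq_abs]; exact norm_le_pi_norm x i) hx
    have by' : ∀ i, |y i| ≤ 1 := fun i => le_trans (by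
      rw [← Real.norm_eq_abs]; exact norm_le_pi_norm y i) hy
    have bz : ∀ i, |z i| ≤ 1 := fun i => le_trans (by
      rw [← Real.norm_eq_abs]; exact norm_le_pi_norm z i) hz
    have bw : ∀ i, |w i| ≤ 1 := fun i => le_trans (by
      rw [← Real.norm_eq_abs]; exact norm_le_pi_norm w i) hw
    have h1 := comb_bound (bz 0) (bz 1) (bil_bound (bx 0) (bx 1) (by' 0) (by' 1))
      (bil_bound (bx 2) (bx 3) (by' 2) (by' 3))
    have h2 := comb_bound (bz 2) (bz 3) (bil_bound (bx 4) (bx 5) (by' 4) (by' 5))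
      (bil_bound (bx 6) (bx 7) (by' 6) (by' 7))
    have h3 := comb_bound (bw 0) (bw 1) h1 h2
    linarith [h3]
  have hmem : (8:ℝ) ∈ {r : ℝ | ∃ x y z w : Fin 8 → ℝ, ‖x‖ ≤ 1 ∧ ‖y‖ ≤ 1 ∧ ‖z‖ ≤ 1 ∧ ‖w‖ ≤ 1 ∧
      r = |(w 0 + w 1) *
            ((z 0 + z 1) * (x 0 * y 0 + x 0 * y 1 + x 1 * y 0 - x 1 * y 1)
              + (z 0 - z 1) * (x 2 * y 2 + x 2 * y 3 + x 3 * y 2 - x 3 * y 3))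
         + (w 0 - w 1) *
            ((z 2 + z 3) * (x 4 * y 4 + x 4 * y 5 + x 5 * y 4 - x 5 * y 5)
              + (z 2 - z 3) * (x 6 * y 6 + x 6 * y 7 + x 7 * y 6 - x 7 * y 7))|} := by
    refine ⟨(fun _ => 1), (fun _ => 1), (fun i => if i = 0 ∨ i = 2 then (1:ℝ) else 0),
      (fun i => if i = 0 then (1:ℝ) else 0), ?_, ?_, ?_, ?_, ?_⟩
    · exact (pi_norm_le_iff_of_nonneg zero_le_one).mpr (fun i => by simp)
    · exact (pi_norm_le_iff_of_nonneg zero_le_one).mpr (fun i => by simp)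
    · exact (pi_norm_le_iff_of_nonneg zero_le_one).mpr (fun i => by split_ifs <;> norm_num)
    · exact (pi_norm_le_iff_of_nonneg zero_le_one).mpr (fun i => by split_ifs <;> norm_num)
    · norm_num [Fin.ext_iff]
  exact le_antisymm (csSup_le ⟨8, hmem⟩ hub) (le_csSup ⟨8, hub⟩ hmem)
end

section
/- If C₄ satisfies (Σ_{i₁,i₂,i₃,i₄=1}^{8} |T₄(e_{i₁},e_{i₂},e_{i₃},e_{i₄})|^{8/5})^{5/8} ≤ C₄·‖T₄‖ for the 4-linear form T₄ of the previous construction, then C₄ ≥ 2^{3/4}. -/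
lemma bh_key_7 (a b P Q M N : ℝ) (ha : |a| ≤ M) (hb : |b| ≤ M)
    (hP : |P| ≤ N) (hQ : |Q| ≤ N) :
    |(a + b) * P + (a - b) * Q| ≤ 2 * (M * N) := by
  have hM : 0 ≤ M := le_trans (abs_nonneg a) ha
  have hP' := abs_le.1 hP
  have hQ' := abs_le.1 hQ
  have h1 : |P + Q| + |P - Q| ≤ 2 * N := by
    rcases abs_cases (P + Q) with ⟨h, _⟩ | ⟨h, _⟩ <;>
      rcases abs_cases (P - Q) with ⟨h2, _⟩ | ⟨h2, _⟩ <;>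
      rw [h, h2] <;> linarith [hP'.1, hP'.2, hQ'.1, hQ'.2]
  calc |(a + b) * P + (a - b) * Q| = |a * (P + Q) + b * (P - Q)| := by ring_nf
    _ ≤ |a * (P + Q)| + |b * (P - Q)| := abs_add_le _ _
    _ = |a| * |P + Q| + |b| * |P - Q| := by rw [abs_mul, abs_mul]
    _ ≤ M * |P + Q| + M * |P - Q| := by gcongr
    _ = M * (|P + Q| + |P - Q|) := by ring
    _ ≤ M * (2 * N) := mul_le_mul_of_nonneg_left h1 hM
    _ = 2 * (M * N) := by ring

def bh_dd_7 (a b : Fin 8) : ℤ := if b = a then 1 else 0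

def bh_coef_7 (i j k l : Fin 8) : ℤ :=
  (bh_dd_7 l 0 + bh_dd_7 l 1) *
      ((bh_dd_7 k 0 + bh_dd_7 k 1) *
          (bh_dd_7 i 0 * bh_dd_7 j 0 + bh_dd_7 i 0 * bh_dd_7 j 1
            + bh_dd_7 i 1 * bh_dd_7 j 0 - bh_dd_7 i 1 * bh_dd_7 j 1)
        + (bh_dd_7 k 0 - bh_dd_7 k 1) *
          (bh_dd_7 i 2 * bh_dd_7 j 2 + bh_dd_7 i 2 * bh_dd_7 j 3
            + bh_dd_7 i 3 * bh_dd_7 j 2 - bh_dd_7 i 3 * bh_dd_7 j 3))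
    + (bh_dd_7 l 0 - bh_dd_7 l 1) *
      ((bh_dd_7 k 2 + bh_dd_7 k 3) *
          (bh_dd_7 i 4 * bh_dd_7 j 4 + bh_dd_7 i 4 * bh_dd_7 j 5
            + bh_dd_7 i 5 * bh_dd_7 j 4 - bh_dd_7 i 5 * bh_dd_7 j 5)
        + (bh_dd_7 k 2 - bh_dd_7 k 3) *
          (bh_dd_7 i 6 * bh_dd_7 j 6 + bh_dd_7 i 6 * bh_dd_7 j 7
            + bh_dd_7 i 7 * bh_dd_7 j 6 - bh_dd_7 i 7 * bh_dd_7 j 7))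

lemma bh_coef_cases_7 : ∀ i j k l : Fin 8,
    bh_coef_7 i j k l = -1 ∨ bh_coef_7 i j k l = 0 ∨ bh_coef_7 i j k l = 1 := by decide

lemma bh_coef_sum_7 :
    (∑ i : Fin 8, ∑ j : Fin 8, ∑ k : Fin 8, ∑ l : Fin 8, |bh_coef_7 i j k l|) = 64 := by
  decide

/-- If the `m = 4` Bohnenblust–Hille inequality with constant `C` holds for the
4-linear form `T₄` on `ℝ⁸` with sup norm, then `C ≥ 2^(3/4)`. -/
theorem stmt_7 (C : ℝ)
    (T : ContinuousMultilinearMap ℝ (fun _ : Fin 4 => (Fin 8 → ℝ)) ℝ)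
    (hT : ∀ x y z w : Fin 8 → ℝ,
      T ![x, y, z, w] =
        (w 0 + w 1) *
            ((z 0 + z 1) * (x 0 * y 0 + x 0 * y 1 + x 1 * y 0 - x 1 * y 1)
              + (z 0 - z 1) * (x 2 * y 2 + x 2 * y 3 + x 3 * y 2 - x 3 * y 3))
          + (w 0 - w 1) *
            ((z 2 + z 3) * (x 4 * y 4 + x 4 * y 5 + x 5 * y 4 - x 5 * y 5)
              + (z 2 - z 3) * (x 6 * y 6 + x 6 * y 7 + x 7 * y 6 - x 7 * y 7)))
    (hC : (∑ i : Fin 8, ∑ j : Fin 8, ∑ k : Fin 8, ∑ l : Fin 8,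
        |T ![Pi.single i (1 : ℝ), Pi.single j (1 : ℝ), Pi.single k (1 : ℝ),
             Pi.single l (1 : ℝ)]| ^ ((8 : ℝ) / 5)) ^ ((5 : ℝ) / 8)
      ≤ C * ‖T‖) :
    (2 : ℝ) ^ ((3 : ℝ) / 4) ≤ C := by
  -- Step 1: ‖T‖ ≤ 8
  have h8 : ‖T‖ ≤ 8 := by
    refine T.opNorm_le_bound (by norm_num) (fun m => ?_)
    have hm : m = ![m 0, m 1, m 2, m 3] := by
      funext i; fin_cases i <;> rfl
    set x := m 0 with hx
    set y := m 1 with hy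
    set z := m 2 with hz
    set w := m 3 with hw
    have hprod : ∏ i, ‖m i‖ = ‖x‖ * ‖y‖ * ‖z‖ * ‖w‖ := by
      simp [Fin.prod_univ_four]; rfl
    rw [hprod, hm, hT, Real.norm_eq_abs]
    have hxn : ∀ i, |x i| ≤ ‖x‖ := fun i => norm_le_pi_norm x i
    have hyn : ∀ i, |y i| ≤ ‖y‖ := fun i => norm_le_pi_norm y i
    have hzn : ∀ i, |z i| ≤ ‖z‖ := fun i => norm_le_pi_norm z i
    have hwn : ∀ i, |w i| ≤ ‖w‖ := fun i => norm_le_pi_norm w i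
    have hA1 : |x 0 * y 0 + x 0 * y 1 + x 1 * y 0 - x 1 * y 1| ≤ 2 * (‖x‖ * ‖y‖) := by
      have := bh_key_7 (x 0) (x 1) (y 0) (y 1) ‖x‖ ‖y‖ (hxn 0) (hxn 1) (hyn 0) (hyn 1)
      calc |x 0 * y 0 + x 0 * y 1 + x 1 * y 0 - x 1 * y 1|
          = |(x 0 + x 1) * y 0 + (x 0 - x 1) * y 1| := by ring_nf
        _ ≤ 2 * (‖x‖ * ‖y‖) := this
    have hA2 : |x 2 * y 2 + x 2 * y 3 + x 3 * y 2 - x 3 * y 3| ≤ 2 * (‖x‖ * ‖y‖) := by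
      have := bh_key_7 (x 2) (x 3) (y 2) (y 3) ‖x‖ ‖y‖ (hxn 2) (hxn 3) (hyn 2) (hyn 3)
      calc |x 2 * y 2 + x 2 * y 3 + x 3 * y 2 - x 3 * y 3|
          = |(x 2 + x 3) * y 2 + (x 2 - x 3) * y 3| := by ring_nf
        _ ≤ 2 * (‖x‖ * ‖y‖) := this
    have hA3 : |x 4 * y 4 + x 4 * y 5 + x 5 * y 4 - x 5 * y 5| ≤ 2 * (‖x‖ * ‖y‖) := by
      have := bh_key_7 (x 4) (x 5) (y 4) (y 5) ‖x‖ ‖y‖ (hxn 4) (hxn 5) (hyn 4) (hyn 5)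
      calc |x 4 * y 4 + x 4 * y 5 + x 5 * y 4 - x 5 * y 5|
          = |(x 4 + x 5) * y 4 + (x 4 - x 5) * y 5| := by ring_nf
        _ ≤ 2 * (‖x‖ * ‖y‖) := this
    have hA4 : |x 6 * y 6 + x 6 * y 7 + x 7 * y 6 - x 7 * y 7| ≤ 2 * (‖x‖ * ‖y‖) := by
      have := bh_key_7 (x 6) (x 7) (y 6) (y 7) ‖x‖ ‖y‖ (hxn 6) (hxn 7) (hyn 6) (hyn 7)
      calc |x 6 * y 6 + x 6 * y 7 + x 7 * y 6 - x 7 * y 7|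
          = |(x 6 + x 7) * y 6 + (x 6 - x 7) * y 7| := by ring_nf
        _ ≤ 2 * (‖x‖ * ‖y‖) := this
    have hB1 : |(z 0 + z 1) * (x 0 * y 0 + x 0 * y 1 + x 1 * y 0 - x 1 * y 1)
        + (z 0 - z 1) * (x 2 * y 2 + x 2 * y 3 + x 3 * y 2 - x 3 * y 3)|
        ≤ 2 * (‖z‖ * (2 * (‖x‖ * ‖y‖))) :=
      bh_key_7 (z 0) (z 1) _ _ ‖z‖ _ (hzn 0) (hzn 1) hA1 hA2
    have hB2 : |(z 2 + z 3) * (x 4 * y 4 + x 4 * y 5 + x 5 * y 4 - x 5 * y 5)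
        + (z 2 - z 3) * (x 6 * y 6 + x 6 * y 7 + x 7 * y 6 - x 7 * y 7)|
        ≤ 2 * (‖z‖ * (2 * (‖x‖ * ‖y‖))) :=
      bh_key_7 (z 2) (z 3) _ _ ‖z‖ _ (hzn 2) (hzn 3) hA3 hA4
    have hfin := bh_key_7 (w 0) (w 1) _ _ ‖w‖ _ (hwn 0) (hwn 1) hB1 hB2
    calc |(w 0 + w 1) *
              ((z 0 + z 1) * (x 0 * y 0 + x 0 * y 1 + x 1 * y 0 - x 1 * y 1)
                + (z 0 - z 1) * (x 2 * y 2 + x 2 * y 3 + x 3 * y 2 - x 3 * y 3))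
            + (w 0 - w 1) *
              ((z 2 + z 3) * (x 4 * y 4 + x 4 * y 5 + x 5 * y 4 - x 5 * y 5)
                + (z 2 - z 3) * (x 6 * y 6 + x 6 * y 7 + x 7 * y 6 - x 7 * y 7))|
        ≤ 2 * (‖w‖ * (2 * (‖z‖ * (2 * (‖x‖ * ‖y‖))))) := hfin
      _ = 8 * (‖x‖ * ‖y‖ * ‖z‖ * ‖w‖) := by ring
  -- Step 2: values on basis vectors
  have hval : ∀ i j k l : Fin 8,
      T ![Pi.single i (1 : ℝ), Pi.single j (1 : ℝ), Pi.single k (1 : ℝ),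
          Pi.single l (1 : ℝ)] = (bh_coef_7 i j k l : ℝ) := by
    intro i j k l
    rw [hT]
    simp only [Pi.single_apply]
    unfold bh_coef_7 bh_dd_7
    push_cast [apply_ite (fun n : ℤ => (n : ℝ))]
    ring
  -- Step 3: the sum equals 64
  have hsum : (∑ i : Fin 8, ∑ j : Fin 8, ∑ k : Fin 8, ∑ l : Fin 8,
      |T ![Pi.single i (1 : ℝ), Pi.single j (1 : ℝ), Pi.single k (1 : ℝ),
           Pi.single l (1 : ℝ)]| ^ ((8 : ℝ) / 5)) = 64 := by
    have h1 : ∀ i j k l : Fin 8,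
        |T ![Pi.single i (1 : ℝ), Pi.single j (1 : ℝ), Pi.single k (1 : ℝ),
             Pi.single l (1 : ℝ)]| ^ ((8 : ℝ) / 5) = ((|bh_coef_7 i j k l| : ℤ) : ℝ) := by
      intro i j k l
      rw [hval i j k l]
      rcases bh_coef_cases_7 i j k l with h | h | h <;> rw [h] <;>
        norm_num [Real.one_rpow, Real.zero_rpow]
    simp_rw [h1]
    calc (∑ i : Fin 8, ∑ j : Fin 8, ∑ k : Fin 8, ∑ l : Fin 8,
            ((|bh_coef_7 i j k l| : ℤ) : ℝ))
        = ((∑ i : Fin 8, ∑ j : Fin 8, ∑ k : Fin 8, ∑ l : Fin 8,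
            |bh_coef_7 i j k l| : ℤ) : ℝ) := by push_cast; rfl
      _ = 64 := by rw [bh_coef_sum_7]; norm_num
  rw [hsum] at hC
  -- Step 4: arithmetic
  have h64 : (64 : ℝ) ^ ((5 : ℝ) / 8) = 2 ^ ((15 : ℝ) / 4) := by
    have h2 : (64 : ℝ) = (2 : ℝ) ^ (6 : ℝ) := by
      rw [show (6 : ℝ) = ((6 : ℕ) : ℝ) by norm_num, Real.rpow_natCast]; norm_num
    rw [h2, ← Real.rpow_mul (by norm_num)]
    norm_num
  rw [h64] at hC
  have hpos : (0 : ℝ) < 2 ^ ((15 : ℝ) / 4) := Real.rpow_pos_of_pos (by norm_num) _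
  have hTn : 0 ≤ ‖T‖ := norm_nonneg _
  have hCpos : 0 < C := by
    by_contra h
    push_neg at h
    nlinarith
  have hkey : (2 : ℝ) ^ ((3 : ℝ) / 4) * 8 = 2 ^ ((15 : ℝ) / 4) := by
    rw [show (8 : ℝ) = (2 : ℝ) ^ (3 : ℝ) by
          rw [show (3 : ℝ) = ((3 : ℕ) : ℝ) by norm_num, Real.rpow_natCast]; norm_num,
        ← Real.rpow_add (by norm_num)]
    norm_num
  nlinarith [mul_le_mul_of_nonneg_left h8 hCpos.le]
end

section
/- Define inductively m-linear forms T_m on (ℝ^{2^{m−1}})^m by: T₂(x₁,x₂) = x₁¹x₂¹ + x₁¹x₂² + x₁²x₂¹ − x₁²x₂², and T_m(x₁,…,x_m) = (x_m¹ + x_m²)T_{m−1}(x₁,…,x_{m−1}) + (x_m¹ − x_m²)T_{m−1}(B^{2^{m−2}}x₁, B^{2^{m−2}}x₂, B^{2^{m−3}}x₃, …, B²x_{m−1}), where B is the backward shift. Then ‖T_m‖ = 2^{m−1} for every m ≥ 2, with respect to the sup norm on ℝ^{2^{m−1}}. -/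
/-- The backward shift iterated `p` times: `(B^p a)ᵢ = a_{i+p}`. -/
def bshift (p : ℕ) (a : ℕ → ℝ) : ℕ → ℝ := fun i => a (i + p)

/-- The inductively defined `m`-linear forms of Diniz–Muñoz-Fernández–Pellegrino–
Seoane-Sepúlveda.  The `k`-th argument vector is `x k`, living (morally) in
`ℝ^(2^(m-1))`; only the coordinates `x k i` with `k < m`, `i < 2^(m-1)` are read.
`Tm 2` is `x₁¹x₂¹ + x₁¹x₂² + x₁²x₂¹ − x₁²x₂²` and, for `m ≥ 3`,
`Tm m x = (x_m¹ + x_m²)·Tm (m-1) x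
        + (x_m¹ − x_m²)·Tm (m-1) (B^{2^{m-2}}x₁, B^{2^{m-2}}x₂, B^{2^{m-3}}x₃, …, B²x_{m-1})`. -/
def Tm : ℕ → (ℕ → ℕ → ℝ) → ℝ
  | 0, _ => 0
  | 1, _ => 0
  | 2, x => x 0 0 * x 1 0 + x 0 0 * x 1 1 + x 0 1 * x 1 0 - x 0 1 * x 1 1
  | (n + 3), x =>
      (x (n + 2) 0 + x (n + 2) 1) * Tm (n + 2) x
        + (x (n + 2) 0 - x (n + 2) 1) *
          Tm (n + 2) (fun j => bshift (if j = 0 then 2 ^ (n + 1) else 2 ^ (n + 2 - j)) (x j))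

lemma Tm_le (n : ℕ) : ∀ x : ℕ → ℕ → ℝ, (∀ k < n + 2, ∀ i, |x k i| ≤ 1) →
    |Tm (n + 2) x| ≤ 2 ^ (n + 1) := by
  induction n with
  | zero =>
    intro x h
    have ha := h 0 (by norm_num) 0
    have hb := h 0 (by norm_num) 1
    have hc := h 1 (by norm_num) 0
    have hd := h 1 (by norm_num) 1
    have key : |x 1 0 + x 1 1| + |x 1 0 - x 1 1| ≤ 2 := by
      rcases abs_le.1 hc with ⟨hc1, hc2⟩
      rcases abs_le.1 hd with ⟨hd1, hd2⟩
      rcases abs_cases (x 1 0 + x 1 1) with ⟨e1, _⟩ | ⟨e1, _⟩ <;>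
        rcases abs_cases (x 1 0 - x 1 1) with ⟨e2, _⟩ | ⟨e2, _⟩ <;> linarith
    have hT : Tm (0 + 2) x = x 0 0 * (x 1 0 + x 1 1) + x 0 1 * (x 1 0 - x 1 1) := by
      show x 0 0 * x 1 0 + x 0 0 * x 1 1 + x 0 1 * x 1 0 - x 0 1 * x 1 1 = _
      ring
    rw [hT]
    calc |x 0 0 * (x 1 0 + x 1 1) + x 0 1 * (x 1 0 - x 1 1)|
        ≤ |x 0 0| * |x 1 0 + x 1 1| + |x 0 1| * |x 1 0 - x 1 1| := by
          refine (abs_add_le _ _).trans ?_; rw [abs_mul, abs_mul]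
      _ ≤ 1 * |x 1 0 + x 1 1| + 1 * |x 1 0 - x 1 1| := by gcongr <;> positivity
      _ = |x 1 0 + x 1 1| + |x 1 0 - x 1 1| := by ring
      _ ≤ 2 := key
      _ = 2 ^ (0 + 1) := by norm_num
  | succ n ih =>
    intro x h
    have hS : |Tm (n + 2) x| ≤ 2 ^ (n + 1) := ih x (fun k hk i => h k (by omega) i)
    have hS' : |Tm (n + 2) (fun j => bshift (if j = 0 then 2 ^ (n + 1) else 2 ^ (n + 2 - j)) (x j))| ≤ 2 ^ (n + 1) := by
      apply ih
      intro k hk i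
      simp only [bshift]
      exact h k (by omega) _
    have ha := h (n + 2) (by omega) 0
    have hb := h (n + 2) (by omega) 1
    have key : |x (n + 2) 0 + x (n + 2) 1| + |x (n + 2) 0 - x (n + 2) 1| ≤ 2 := by
      rcases abs_le.1 ha with ⟨ha1, ha2⟩
      rcases abs_le.1 hb with ⟨hb1, hb2⟩
      rcases abs_cases (x (n + 2) 0 + x (n + 2) 1) with ⟨e1, _⟩ | ⟨e1, _⟩ <;>
        rcases abs_cases (x (n + 2) 0 - x (n + 2) 1) with ⟨e2, _⟩ | ⟨e2, _⟩ <;> linarith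
    show |_ * _ + _ * _| ≤ _
    calc |(x (n+2) 0 + x (n+2) 1) * Tm (n+2) x + (x (n+2) 0 - x (n+2) 1) *
          Tm (n + 2) (fun j => bshift (if j = 0 then 2 ^ (n + 1) else 2 ^ (n + 2 - j)) (x j))|
        ≤ |x (n+2) 0 + x (n+2) 1| * |Tm (n+2) x| + |x (n+2) 0 - x (n+2) 1| *
          |Tm (n + 2) (fun j => bshift (if j = 0 then 2 ^ (n + 1) else 2 ^ (n + 2 - j)) (x j))| := by
          refine (abs_add_le _ _).trans ?_
          rw [abs_mul, abs_mul]
      _ ≤ |x (n+2) 0 + x (n+2) 1| * 2 ^ (n+1) + |x (n+2) 0 - x (n+2) 1| * 2 ^ (n+1) := by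
          gcongr <;> positivity
      _ = (|x (n+2) 0 + x (n+2) 1| + |x (n+2) 0 - x (n+2) 1|) * 2 ^ (n+1) := by ring
      _ ≤ 2 * 2 ^ (n+1) := by nlinarith [pow_pos (by norm_num : (0:ℝ) < 2) (n+1)]
      _ = 2 ^ (n+2) := by ring

noncomputable def xstar : ℕ → ℕ → ℝ := fun _ i => if i < 2 then 1 else 0

lemma Tm_xstar (n : ℕ) : Tm (n + 2) xstar = 2 ^ (n + 1) := by
  induction n with
  | zero => norm_num [Tm, xstar]
  | succ n ih =>
    show (xstar (n+2) 0 + xstar (n+2) 1) * Tm (n+2) xstar + _ = _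
    simp only [xstar, if_pos (by norm_num : (0:ℕ) < 2), if_pos (by norm_num : (1:ℕ) < 2)]
    rw [ih]
    ring

/-- `‖T_m‖ = 2^(m-1)` for every `m ≥ 2`, with respect to the sup norm on `ℝ^(2^(m-1))`:
the supremum of `|T_m|` over `m`-tuples of vectors of `ℝ^(2^(m-1))` (viewed as finitely
supported sequences) lying in the unit ball of the sup norm is exactly `2^(m-1)`. -/
theorem stmt_8 (m : ℕ) (hm : 2 ≤ m) :
    sSup {r : ℝ | ∃ x : ℕ → ℕ → ℝ,
        (∀ k < m, ∀ i, |x k i| ≤ 1) ∧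
        (∀ k < m, ∀ i, 2 ^ (m - 1) ≤ i → x k i = 0) ∧
        r = |Tm m x|} = 2 ^ (m - 1) := by
  obtain ⟨n, rfl⟩ : ∃ n, m = n + 2 := ⟨m - 2, by omega⟩
  have hm1 : n + 2 - 1 = n + 1 := by omega
  rw [hm1]
  apply IsGreatest.csSup_eq
  constructor
  · refine ⟨xstar, ?_, ?_, ?_⟩
    · intro k _ i
      simp only [xstar]
      split <;> simp
    · intro k _ i hi
      have h2 : (2:ℕ) ^ 1 ≤ 2 ^ (n + 1) := Nat.pow_le_pow_right (by norm_num) (by omega)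
      have : 2 ≤ i := by simpa using h2.trans hi
      simp only [xstar]
      rw [if_neg]
      omega
    · rw [Tm_xstar, abs_of_pos (by positivity)]
  · rintro r ⟨x, hx1, _, rfl⟩
    exact Tm_le n x hx1
end

section
/- For the inductively defined m-linear forms T_m on (ℝ^{2^{m−1}})^m (with T₂(x₁,x₂) = x₁¹x₂¹ + x₁¹x₂² + x₁²x₂¹ − x₁²x₂² and T_m built from T_{m−1} via T_m(x₁,…,x_m) = (x_m¹+x_m²)T_{m−1}(x₁,…,x_{m−1}) + (x_m¹−x_m²)T_{m−1}(B^{2^{m−2}}x₁, B^{2^{m−2}}x₂, B^{2^{m−3}}x₃, …, B²x_{m−1})), the value |T_m(e_{i₁},…,e_{i_m})| on canonical basis vectors is always 0 or 1, and it equals 1 for exactly 4^{m−1} tuples (i₁,…,i_m). -/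
def Ef (f : ℕ → ℕ) : ℕ → ℕ → ℝ := fun k i => if i = f k then 1 else 0

def Good (m : ℕ) (f : ℕ → ℕ) : Prop :=
  f 0 < 2 ^ (m - 1) ∧ ∀ j < m, 0 < j → f j / 2 = f 0 / 2 ^ j

instance (m : ℕ) (f : ℕ → ℕ) : Decidable (Good m f) := by
  unfold Good; infer_instance

lemma Tm_congr (m : ℕ) : ∀ (x y : ℕ → ℕ → ℝ), (∀ k, k < m → x k = y k) → Tm m x = Tm m y := by
  induction m using Nat.strong_induction_on with
  | _ m ih =>
    match m with
    | 0 => intro x y h; rfl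
    | 1 => intro x y h; rfl
    | 2 =>
      intro x y h
      simp only [Tm, h 0 (by omega), h 1 (by omega)]
    | n + 3 =>
      intro x y h
      simp only [Tm]
      rw [ih (n+2) (by omega) x y (fun k hk => h k (by omega)),
        ih (n+2) (by omega)
          (fun j => bshift (if j = 0 then 2 ^ (n + 1) else 2 ^ (n + 2 - j)) (x j))
          (fun j => bshift (if j = 0 then 2 ^ (n + 1) else 2 ^ (n + 2 - j)) (y j))
          (fun k hk => by simp only [h k (by omega)]),
        h (n+2) (by omega)]

lemma Tm_zero (m : ℕ) : ∀ (x : ℕ → ℕ → ℝ) (k : ℕ), k < m → (∀ i, x k i = 0) → Tm m x = 0 := by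
  induction m using Nat.strong_induction_on with
  | _ m ih =>
    match m with
    | 0 => intro x k hk hz; rfl
    | 1 => intro x k hk hz; rfl
    | 2 =>
      intro x k hk hz
      interval_cases k <;> simp only [Tm, hz 0, hz 1] <;> ring
    | n + 3 =>
      intro x k hk hz
      simp only [Tm]
      rcases eq_or_lt_of_le (Nat.lt_succ_iff.mp hk) with h | h
      · rw [h] at hz; rw [hz 0, hz 1]; ring
      · rw [ih (n+2) (by omega) x k h hz,
          ih (n+2) (by omega) _ k h (fun i => by simp [bshift, hz])]
        ring

lemma good_low (n : ℕ) (f : ℕ → ℕ) (hlow : f 0 < 2 ^ (n + 1)) :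
    Good (n + 3) f ↔ (f (n + 2) < 2 ∧ Good (n + 2) f) := by
  have hle : (2:ℕ) ^ (n + 1) ≤ 2 ^ (n + 2) := Nat.pow_le_pow_right (by norm_num) (by omega)
  constructor
  · rintro ⟨h0, h⟩
    have h0' : f 0 < 2 ^ (n + 2) := h0
    have hz : f 0 / 2 ^ (n + 2) = 0 := Nat.div_eq_of_lt h0'
    have h2 : f (n + 2) / 2 = 0 := by rw [h (n + 2) (by omega) (by omega), hz]
    refine ⟨by omega, hlow, fun j hj hj0 => h j (by omega) hj0⟩
  · rintro ⟨h2, _, h⟩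
    refine ⟨show f 0 < 2 ^ (n + 2) by omega, fun j hj hj0 => ?_⟩
    rcases Nat.lt_or_ge j (n + 2) with hj' | hj'
    · exact h j hj' hj0
    · have hjeq : j = n + 2 := by omega
      subst hjeq
      rw [Nat.div_eq_of_lt (show f 0 < 2 ^ (n + 2) by omega)]
      omega

lemma not_good_bad (n : ℕ) (f : ℕ → ℕ) (hhigh : 2 ^ (n + 1) ≤ f 0) (j : ℕ) (hj : j < n + 2)
    (hbad : f j < if j = 0 then 2 ^ (n + 1) else 2 ^ (n + 2 - j)) : ¬ Good (n + 3) f := by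
  rintro ⟨h0, h⟩
  rcases Nat.eq_zero_or_pos j with rfl | hj0
  · rw [if_pos rfl] at hbad; omega
  · rw [if_neg (by omega)] at hbad
    have hd := h j (by omega) hj0
    have e1 : (2:ℕ) ^ (n + 1) = 2 ^ (n + 1 - j) * 2 ^ j := by
      rw [← pow_add]; congr 1; omega
    have hb : 2 ^ (n + 1 - j) ≤ f 0 / 2 ^ j :=
      (Nat.le_div_iff_mul_le (pow_pos (by norm_num : (0:ℕ) < 2) j)).mpr (by omega)
    have hb2 : 2 ^ (n + 1 - j) ≤ f j / 2 := by rw [hd]; exact hb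
    have hb3 : 2 ^ (n + 1 - j) * 2 ≤ f j :=
      (Nat.le_div_iff_mul_le (by norm_num)).mp hb2
    have e2 : (2:ℕ) ^ (n + 2 - j) = 2 * 2 ^ (n + 1 - j) := by
      rw [← pow_succ']; congr 1; omega
    omega

lemma good_high (n : ℕ) (f : ℕ → ℕ) (hhigh : 2 ^ (n + 1) ≤ f 0)
    (hall : ∀ j < n + 2, (if j = 0 then 2 ^ (n + 1) else 2 ^ (n + 2 - j)) ≤ f j) :
    Good (n + 3) f ↔ (f (n + 2) < 2 ∧
      Good (n + 2) (fun j => f j - if j = 0 then 2 ^ (n + 1) else 2 ^ (n + 2 - j))) := by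
  have hpow : (2:ℕ) ^ (n + 2) = 2 ^ (n + 1) + 2 ^ (n + 1) := by rw [pow_succ]; ring
  have keyj : ∀ j, 0 < j → j < n + 2 →
      ((f j - 2 ^ (n + 2 - j)) / 2 = (f 0 - 2 ^ (n + 1)) / 2 ^ j ↔ f j / 2 = f 0 / 2 ^ j) := by
    intro j hj0 hj
    set s := 2 ^ (n + 1 - j) with hs
    have e1 : (2:ℕ) ^ (n + 1) = 2 ^ j * s := by rw [hs, ← pow_add]; congr 1; omega
    have e2 : (2:ℕ) ^ (n + 2 - j) = 2 * s := by rw [hs, ← pow_succ']; congr 1; omega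
    have hallj := hall j hj
    rw [if_neg (by omega)] at hallj
    have lA : (f 0 - 2 ^ (n + 1)) / 2 ^ j = f 0 / 2 ^ j - s := by
      rw [e1, Nat.sub_mul_div]
    have lB : (f j - 2 ^ (n + 2 - j)) / 2 = f j / 2 - s := by
      rw [e2, Nat.sub_mul_div]
    have e1' : (2:ℕ) ^ (n + 1) = s * 2 ^ j := by rw [e1, mul_comm]
    have b1 : s ≤ f 0 / 2 ^ j :=
      (Nat.le_div_iff_mul_le (pow_pos (by norm_num : (0:ℕ) < 2) j)).mpr (by omega)
    have b2 : s ≤ f j / 2 := by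
      have : s * 2 ≤ f j := by omega
      exact (Nat.le_div_iff_mul_le (by norm_num)).mpr this
    rw [lA, lB]
    omega
  have h00 := hall 0 (by omega)
  rw [if_pos rfl] at h00
  constructor
  · rintro ⟨h0, h⟩
    have h0' : f 0 < 2 ^ (n + 2) := h0
    have hz : f 0 / 2 ^ (n + 2) = 0 := Nat.div_eq_of_lt h0'
    have h2 : f (n + 2) / 2 = 0 := by rw [h (n + 2) (by omega) (by omega), hz]
    refine ⟨by omega, ?_, fun j hj hj0 => ?_⟩
    · show f 0 - (if (0:ℕ) = 0 then 2 ^ (n + 1) else 2 ^ (n + 2 - 0)) < 2 ^ (n + 1)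
      rw [if_pos rfl]; omega
    · show (f j - if j = 0 then 2 ^ (n + 1) else 2 ^ (n + 2 - j)) / 2
        = (f 0 - if (0:ℕ) = 0 then 2 ^ (n + 1) else 2 ^ (n + 2 - 0)) / 2 ^ j
      rw [if_pos rfl, if_neg (by omega : j ≠ 0)]
      exact (keyj j hj0 hj).mpr (h j (by omega) hj0)
  · rintro ⟨h2, hg0, hg⟩
    have hg0' : f 0 - 2 ^ (n + 1) < 2 ^ (n + 1) := by
      have h' : (fun j => f j - if j = 0 then 2 ^ (n + 1) else 2 ^ (n + 2 - j)) 0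
          = f 0 - 2 ^ (n + 1) := by simp
      rw [← h']; exact hg0
    have h0 : f 0 < 2 ^ (n + 2) := by omega
    refine ⟨h0, fun j hj hj0 => ?_⟩
    rcases Nat.lt_or_ge j (n + 2) with hj' | hj'
    · have hh := hg j hj' hj0
      simp only [if_neg (by omega : j ≠ 0), if_pos rfl] at hh
      exact (keyj j hj0 hj').mp hh
    · have hjeq : j = n + 2 := by omega
      subst hjeq
      rw [Nat.div_eq_of_lt h0]
      omega

lemma key (n : ℕ) : ∀ f : ℕ → ℕ, |Tm (n + 2) (Ef f)| = if Good (n + 2) f then 1 else 0 := by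
  induction n with
  | zero =>
    intro f
    have hg : Good 2 f ↔ f 0 < 2 ∧ f 1 < 2 := by
      constructor
      · rintro ⟨h0, h⟩
        have h0' : f 0 < 2 := h0
        have h1 := h 1 (by omega) (by omega)
        rw [pow_one, Nat.div_eq_of_lt h0'] at h1
        exact ⟨h0', by omega⟩
      · rintro ⟨h0, h1⟩
        refine ⟨h0, fun j hj hj0 => ?_⟩
        have hjeq : j = 1 := by omega
        subst hjeq
        rw [pow_one, Nat.div_eq_of_lt (show f 0 < 2 from h0)]
        omega
    rw [if_congr hg rfl rfl]
    rcases h0 : f 0 with _ | _ | a <;> rcases h1 : f 1 with _ | _ | b <;>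
      simp [Tm, Ef, h0, h1] <;>
      rw [if_neg (by omega)]
  | succ n ih =>
    intro f
    show |Tm (n + 3) (Ef f)| = if Good (n + 3) f then 1 else 0
    have tm_eq : Tm (n + 3) (Ef f) =
        (Ef f (n + 2) 0 + Ef f (n + 2) 1) * Tm (n + 2) (Ef f)
          + (Ef f (n + 2) 0 - Ef f (n + 2) 1) *
            Tm (n + 2) (fun j => bshift (if j = 0 then 2 ^ (n + 1) else 2 ^ (n + 2 - j)) (Ef f j)) := rfl
    by_cases hlow : f 0 < 2 ^ (n + 1)
    · have hB : Tm (n + 2) (fun j => bshift (if j = 0 then 2 ^ (n + 1) else 2 ^ (n + 2 - j)) (Ef f j)) = 0 := by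
        apply Tm_zero (n + 2) _ 0 (by omega)
        intro i
        simp only [bshift, Ef, if_true]
        rw [if_neg (by omega)]
      rw [tm_eq, hB, mul_zero, add_zero, abs_mul, ih f, if_congr (good_low n f hlow) rfl rfl]
      have habs : |Ef f (n + 2) 0 + Ef f (n + 2) 1| = if f (n + 2) < 2 then 1 else 0 := by
        unfold Ef
        set y := f (n + 2) with hy
        by_cases h2 : y < 2
        · rw [if_pos h2]
          interval_cases y <;> norm_num
        · rw [if_neg h2, if_neg (by omega : ¬(0 = y)), if_neg (by omega : ¬(1 = y))]
          norm_num
      rw [habs]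
      by_cases h2 : f (n + 2) < 2 <;> by_cases hgd : Good (n + 2) f <;>
        simp [h2, hgd]
    · push_neg at hlow
      have hA : Tm (n + 2) (Ef f) = 0 := by
        have h := ih f
        rw [if_neg (fun hgd => by have h1 : f 0 < 2 ^ (n + 1) := hgd.1; omega)] at h
        exact abs_eq_zero.mp h
      by_cases hall : ∀ j < n + 2, (if j = 0 then 2 ^ (n + 1) else 2 ^ (n + 2 - j)) ≤ f j
      · have hB : Tm (n + 2) (fun j => bshift (if j = 0 then 2 ^ (n + 1) else 2 ^ (n + 2 - j)) (Ef f j))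
            = Tm (n + 2) (Ef (fun j => f j - if j = 0 then 2 ^ (n + 1) else 2 ^ (n + 2 - j))) := by
          apply Tm_congr
          intro k hk
          funext i
          simp only [bshift, Ef]
          have hk' := hall k hk
          exact if_congr (by omega) rfl rfl
        rw [tm_eq, hA, mul_zero, zero_add, abs_mul, hB,
          ih (fun j => f j - if j = 0 then 2 ^ (n + 1) else 2 ^ (n + 2 - j)),
          if_congr (good_high n f hlow hall) rfl rfl]
        have habs : |Ef f (n + 2) 0 - Ef f (n + 2) 1| = if f (n + 2) < 2 then 1 else 0 := by
          unfold Ef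
          set y := f (n + 2) with hy
          by_cases h2 : y < 2
          · rw [if_pos h2]
            interval_cases y <;> norm_num
          · rw [if_neg h2, if_neg (by omega : ¬(0 = y)), if_neg (by omega : ¬(1 = y))]
            norm_num
        rw [habs]
        by_cases h2 : f (n + 2) < 2 <;>
          by_cases hgd : Good (n + 2) (fun j => f j - if j = 0 then 2 ^ (n + 1) else 2 ^ (n + 2 - j)) <;>
          simp [h2, hgd]
      · push_neg at hall
        obtain ⟨j, hj, hbad⟩ := hall
        have hB : Tm (n + 2) (fun j => bshift (if j = 0 then 2 ^ (n + 1) else 2 ^ (n + 2 - j)) (Ef f j)) = 0 := by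
          apply Tm_zero (n + 2) _ j hj
          intro i
          simp only [bshift, Ef]
          rw [if_neg (by omega)]
        rw [tm_eq, hA, hB, mul_zero, mul_zero, add_zero, abs_zero,
          if_neg (not_good_bad n f hlow j hj hbad)]

def Fx (m : ℕ) (idx : Fin m → Fin (2 ^ (m - 1))) : ℕ → ℕ :=
  fun k => if h : k < m then (idx ⟨k, h⟩ : ℕ) else 0

def pack (n : ℕ) (p : Fin (2 ^ (n + 1)) × (Fin (n + 1) → Fin 2)) :
    Fin (n + 2) → Fin (2 ^ (n + 1)) :=
  fun k =>
    if h : (k : ℕ) = 0 then p.1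
    else
      ⟨2 * ((p.1 : ℕ) / 2 ^ (k : ℕ)) + (p.2 ⟨(k : ℕ) - 1, by have := k.2; omega⟩ : ℕ), by
        have h1 : (p.1 : ℕ) < 2 ^ (n + 1) := p.1.2
        have h2 : (p.1 : ℕ) / 2 ^ (k : ℕ) ≤ (p.1 : ℕ) / 2 :=
          Nat.div_le_div_left
            (by
              calc (2 : ℕ) = 2 ^ 1 := (pow_one 2).symm
                _ ≤ 2 ^ (k : ℕ) := Nat.pow_le_pow_right (by norm_num) (by omega))
            (by norm_num)
        have h3 : ((p.2 ⟨(k : ℕ) - 1, by have := k.2; omega⟩ : Fin 2) : ℕ) < 2 :=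
          (p.2 _).2
        omega⟩

def unpack (n : ℕ) (idx : Fin (n + 2) → Fin (2 ^ (n + 1))) :
    Fin (2 ^ (n + 1)) × (Fin (n + 1) → Fin 2) :=
  (idx ⟨0, by omega⟩, fun j => ⟨(idx ⟨(j : ℕ) + 1, by have := j.2; omega⟩ : ℕ) % 2, by omega⟩)

lemma count_good (n : ℕ) :
    (Finset.univ.filter
      (fun idx : Fin (n + 2) → Fin (2 ^ (n + 1)) => Good (n + 2) (Fx (n + 2) idx))).card
      = 2 ^ (n + 1) * 2 ^ (n + 1) := by
  have h02 : 0 < n + 2 := by omega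
  have hFx0 : ∀ idx : Fin (n + 2) → Fin (2 ^ (n + 1)), Fx (n + 2) idx 0 = (idx ⟨0, h02⟩ : ℕ) := by
    intro idx; simp only [Fx]; rw [dif_pos h02]
  have hFxj : ∀ (idx : Fin (n + 2) → Fin (2 ^ (n + 1))) (j : ℕ) (hj : j < n + 2),
      Fx (n + 2) idx j = (idx ⟨j, hj⟩ : ℕ) := by
    intro idx j hj; simp only [Fx]; rw [dif_pos hj]
  have hpack0 : ∀ p, pack n p ⟨0, h02⟩ = p.1 := by
    intro p; simp [pack]
  have hpackj : ∀ p (j : ℕ) (hj : j < n + 2) (hj0 : 0 < j),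
      (pack n p ⟨j, hj⟩ : ℕ) = 2 * ((p.1 : ℕ) / 2 ^ j) + (p.2 ⟨j - 1, by omega⟩ : ℕ) := by
    intro p j hj hj0
    simp only [pack]
    rw [dif_neg (show ¬((⟨j, hj⟩ : Fin (n + 2)) : ℕ) = 0 by simp; omega)]
  have := Finset.card_nbij' (s := Finset.univ.filter
      (fun idx : Fin (n + 2) → Fin (2 ^ (n + 1)) => Good (n + 2) (Fx (n + 2) idx)))
      (t := (Finset.univ : Finset (Fin (2 ^ (n + 1)) × (Fin (n + 1) → Fin 2))))
      (unpack n) (pack n)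
      (fun a _ => Finset.mem_univ _)
      (fun p _ => ?_) (fun idx hidx => ?_) (fun p _ => ?_)
  · rw [this, Finset.card_univ, Fintype.card_prod, Fintype.card_fun, Fintype.card_fin,
      Fintype.card_fin, Fintype.card_fin]
  · -- pack lands in the filter
    rw [Finset.mem_coe, Finset.mem_filter]
    refine ⟨Finset.mem_univ _, ?_, ?_⟩
    · rw [hFx0, hpack0]
      exact p.1.2
    · intro j hj hj0
      rw [hFx0, hpack0, hFxj _ j hj, hpackj p j hj hj0]
      have h3 : ((p.2 ⟨j - 1, by omega⟩ : Fin 2) : ℕ) < 2 := (p.2 _).2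
      omega
  · -- left inverse : pack n (unpack n idx) = idx
    rw [Finset.mem_coe, Finset.mem_filter] at hidx
    obtain ⟨-, hg0, hg⟩ := hidx
    funext k
    apply Fin.ext
    by_cases hk : (k : ℕ) = 0
    · have hk' : k = ⟨0, h02⟩ := Fin.ext hk
      rw [hk', hpack0]
      rfl
    · have hkk : (⟨(k : ℕ), k.2⟩ : Fin (n + 2)) = k := rfl
      rw [show k = ⟨(k : ℕ), k.2⟩ from rfl, hpackj _ (k : ℕ) k.2 (by omega)]
      have hgk := hg (k : ℕ) k.2 (by omega)
      rw [hFx0, hFxj _ (k : ℕ) k.2] at hgk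
      have harg : ∀ (h : (k : ℕ) - 1 + 1 < n + 2),
          (⟨(k : ℕ) - 1 + 1, h⟩ : Fin (n + 2)) = ⟨(k : ℕ), k.2⟩ :=
        fun h => Fin.ext (show (k : ℕ) - 1 + 1 = (k : ℕ) by omega)
      have hue : ((unpack n idx).2 ⟨(k : ℕ) - 1, by omega⟩ : ℕ)
          = (idx ⟨(k : ℕ), k.2⟩ : ℕ) % 2 := by
        simp only [unpack]
        rw [harg]
      have hu1 : ((unpack n idx).1 : ℕ) = (idx ⟨0, h02⟩ : ℕ) := rfl
      rw [hue, hu1, ← hgk]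
      omega
  · -- right inverse : unpack n (pack n p) = p
    have h1 : (unpack n (pack n p)).1 = p.1 := by
      show pack n p ⟨0, h02⟩ = p.1
      exact hpack0 p
    have h2 : (unpack n (pack n p)).2 = p.2 := by
      funext j
      apply Fin.ext
      show (pack n p ⟨(j : ℕ) + 1, by have := j.2; omega⟩ : ℕ) % 2 = (p.2 j : ℕ)
      rw [hpackj p ((j : ℕ) + 1) (by have := j.2; omega) (by omega)]
      have hje : (⟨(j : ℕ) + 1 - 1, by omega⟩ : Fin (n + 1)) = j :=
        Fin.ext (show (j : ℕ) + 1 - 1 = (j : ℕ) by omega)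
      rw [hje]
      have h3 : ((p.2 j : Fin 2) : ℕ) < 2 := (p.2 j).2
      omega
    exact Prod.ext h1 h2

/-- On canonical basis vectors `|T_m|` is `0` or `1`, and equals `1` for exactly
`4^(m-1)` tuples of indices. -/
theorem stmt_9 (m : ℕ) (hm : 2 ≤ m) :
    (∀ idx : Fin m → Fin (2 ^ (m - 1)),
      |Tm m (fun k i => if h : k < m then (if i = (idx ⟨k, h⟩ : ℕ) then 1 else 0) else 0)| = 0 ∨
      |Tm m (fun k i => if h : k < m then (if i = (idx ⟨k, h⟩ : ℕ) then 1 else 0) else 0)| = 1) ∧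
    (Finset.univ.filter (fun idx : Fin m → Fin (2 ^ (m - 1)) =>
      |Tm m (fun k i => if h : k < m then (if i = (idx ⟨k, h⟩ : ℕ) then 1 else 0) else 0)|
        = 1)).card = 4 ^ (m - 1) := by
  obtain ⟨n, rfl⟩ : ∃ n, m = n + 2 := ⟨m - 2, by omega⟩
  have hEq : ∀ idx : Fin (n + 2) → Fin (2 ^ (n + 2 - 1)),
      Tm (n + 2) (fun k i => if h : k < n + 2 then
          (if i = (idx ⟨k, h⟩ : ℕ) then 1 else 0) else 0)
        = Tm (n + 2) (Ef (Fx (n + 2) idx)) := by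
    intro idx
    apply Tm_congr
    intro k hk
    funext i
    simp only [Ef, Fx, dif_pos hk]
  constructor
  · intro idx
    rw [hEq idx, key n (Fx (n + 2) idx)]
    by_cases h : Good (n + 2) (Fx (n + 2) idx) <;> simp [h]
  · have hfil : ∀ idx : Fin (n + 2) → Fin (2 ^ (n + 2 - 1)),
        (|Tm (n + 2) (fun k i => if h : k < n + 2 then
            (if i = (idx ⟨k, h⟩ : ℕ) then 1 else 0) else 0)| = 1)
          ↔ Good (n + 2) (Fx (n + 2) idx) := by
      intro idx
      rw [hEq idx, key n (Fx (n + 2) idx)]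
      by_cases h : Good (n + 2) (Fx (n + 2) idx) <;> simp [h]
    rw [Finset.filter_congr (fun idx _ => hfil idx)]
    have h4 : (2 : ℕ) ^ (n + 1) * 2 ^ (n + 1) = 4 ^ (n + 1) := by
      rw [← mul_pow]; norm_num
    exact (count_good n).trans h4
end

section
/- Let m ≥ 2 and suppose C_m > 0 is such that the Bohnenblust–Hille inequality (Σ_{i₁,…,i_m=1}^{N} |T(e_{i₁},…,e_{i_m})|^{2m/(m+1)})^{(m+1)/(2m)} ≤ C_m·‖T‖ holds for every N and every m-linear form T : (ℝ^N)^m → ℝ (with sup norms). Then C_m ≥ 2^{(m−1)/m}. -/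
noncomputable section BHLowerBound

/-- even-indexed part of a sequence -/
def bhEv (z : ℕ → ℝ) : ℕ → ℝ := fun j => z (2 * j)

/-- odd-indexed part of a sequence -/
def bhOd (z : ℕ → ℝ) : ℕ → ℝ := fun j => z (2 * j + 1)

/-- The inductively defined extremal Bohnenblust–Hille multilinear form,
realized on sequences. -/
def bhB : (n : ℕ) → (Fin (n + 1) → ℕ → ℝ) → ℝ
  | 0, x => x 0 0
  | n + 1, x =>
      bhB n (fun k => bhEv (x k.castSucc)) *
          (x (Fin.last (n + 1)) 0 + x (Fin.last (n + 1)) 1)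
        + bhB n (fun k => bhOd (x k.castSucc)) *
          (x (Fin.last (n + 1)) 0 - x (Fin.last (n + 1)) 1)

lemma bhB_bound (n : ℕ) (x : Fin (n + 1) → ℕ → ℝ) (M : Fin (n + 1) → ℝ)
    (h : ∀ k j, |x k j| ≤ M k) : |bhB n x| ≤ 2 ^ n * ∏ k, M k := by
  induction n with
  | zero => simpa [bhB, Fin.prod_univ_one] using h 0 0
  | succ n ih =>
    set a := bhB n (fun k => bhEv (x k.castSucc)) with ha'
    set b := bhB n (fun k => bhOd (x k.castSucc)) with hb'
    set s := x (Fin.last (n + 1)) 0 with hs'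
    set t := x (Fin.last (n + 1)) 1 with ht'
    have ha : |a| ≤ 2 ^ n * ∏ k : Fin (n + 1), M k.castSucc :=
      ih _ _ (fun k j => h k.castSucc (2 * j))
    have hb : |b| ≤ 2 ^ n * ∏ k : Fin (n + 1), M k.castSucc :=
      ih _ _ (fun k j => h k.castSucc (2 * j + 1))
    have hs : |s| ≤ M (Fin.last (n + 1)) := h _ 0
    have ht : |t| ≤ M (Fin.last (n + 1)) := h _ 1
    have key : |s + t| + |s - t| ≤ 2 * M (Fin.last (n + 1)) := by
      rcases abs_cases (s + t) with ⟨h1, _⟩ | ⟨h1, _⟩ <;>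
        rcases abs_cases (s - t) with ⟨h2, _⟩ | ⟨h2, _⟩ <;>
        rcases abs_le.mp hs with ⟨hs1, hs2⟩ <;>
        rcases abs_le.mp ht with ⟨ht1, ht2⟩ <;> linarith
    have hA : (0:ℝ) ≤ 2 ^ n * ∏ k : Fin (n + 1), M k.castSucc :=
      le_trans (abs_nonneg a) ha
    have hprod : ∏ k : Fin (n + 2), M k =
        (∏ k : Fin (n + 1), M k.castSucc) * M (Fin.last (n + 1)) :=
      Fin.prod_univ_castSucc M
    show |a * (s + t) + b * (s - t)| ≤ 2 ^ (n + 1) * ∏ k : Fin (n + 2), M k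
    rw [hprod]
    calc |a * (s + t) + b * (s - t)| ≤ |a| * |s + t| + |b| * |s - t| := by
          refine le_trans (abs_add_le _ _) ?_
          rw [abs_mul, abs_mul]
      _ ≤ (2 ^ n * ∏ k : Fin (n + 1), M k.castSucc) * (|s + t| + |s - t|) := by
          nlinarith [abs_nonneg (s + t), abs_nonneg (s - t)]
      _ ≤ (2 ^ n * ∏ k : Fin (n + 1), M k.castSucc) * (2 * M (Fin.last (n + 1))) :=
          mul_le_mul_of_nonneg_left key hA
      _ = 2 ^ (n + 1) * ((∏ k : Fin (n + 1), M k.castSucc) * M (Fin.last (n + 1))) := by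
          ring

lemma bhEv_add (y z : ℕ → ℝ) : bhEv (y + z) = bhEv y + bhEv z := rfl
lemma bhOd_add (y z : ℕ → ℝ) : bhOd (y + z) = bhOd y + bhOd z := rfl
lemma bhEv_smul (c : ℝ) (y : ℕ → ℝ) : bhEv (c • y) = c • bhEv y := rfl
lemma bhOd_smul (c : ℝ) (y : ℕ → ℝ) : bhOd (c • y) = c • bhOd y := rfl

lemma update_comp_castSucc {n : ℕ} {α : Type*} (x : Fin (n + 2) → ℕ → ℝ) (j : Fin (n + 1))
    (v : ℕ → ℝ) (F : (ℕ → ℝ) → α) :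
    (fun k : Fin (n + 1) => F (Function.update x j.castSucc v k.castSucc)) =
      Function.update (fun k : Fin (n + 1) => F (x k.castSucc)) j (F v) := by
  funext k
  rcases eq_or_ne k j with rfl | hk
  · simp
  · rw [Function.update_of_ne ((Fin.castSucc_injective _).ne hk),
      Function.update_of_ne hk]

lemma update_last_castSucc {n : ℕ} (x : Fin (n + 2) → ℕ → ℝ) (v : ℕ → ℝ) (k : Fin (n + 1)) :
    Function.update x (Fin.last (n + 1)) v k.castSucc = x k.castSucc :=
  Function.update_of_ne (Fin.castSucc_lt_last k).ne _ _

lemma update_castSucc_last {n : ℕ} (x : Fin (n + 2) → ℕ → ℝ) (j : Fin (n + 1)) (v : ℕ → ℝ) :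
    Function.update x j.castSucc v (Fin.last (n + 1)) = x (Fin.last (n + 1)) :=
  Function.update_of_ne (Fin.castSucc_lt_last j).ne' _ _

lemma bhB_add (n : ℕ) (x : Fin (n + 1) → ℕ → ℝ) (k : Fin (n + 1)) (y z : ℕ → ℝ) :
    bhB n (Function.update x k (y + z)) =
      bhB n (Function.update x k y) + bhB n (Function.update x k z) := by
  induction n generalizing y z with
  | zero =>
    have : k = 0 := Fin.fin_one_eq_zero k
    subst this
    simp [bhB]
  | succ n ih =>
    induction k using Fin.lastCases with
    | last =>
      simp only [bhB, Function.update_self, update_last_castSucc, Pi.add_apply]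
      ring
    | cast j =>
      simp only [bhB, update_comp_castSucc, update_castSucc_last, bhEv_add, bhOd_add, ih]
      ring

lemma bhB_smul (n : ℕ) (x : Fin (n + 1) → ℕ → ℝ) (k : Fin (n + 1)) (c : ℝ) (y : ℕ → ℝ) :
    bhB n (Function.update x k (c • y)) = c * bhB n (Function.update x k y) := by
  induction n generalizing y with
  | zero =>
    have : k = 0 := Fin.fin_one_eq_zero k
    subst this
    simp [bhB]
  | succ n ih =>
    induction k using Fin.lastCases with
    | last =>
      simp only [bhB, Function.update_self, update_last_castSucc, Pi.smul_apply, smul_eq_mul]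
      ring
    | cast j =>
      simp only [bhB, update_comp_castSucc, update_castSucc_last, bhEv_smul, bhOd_smul, ih]
      ring

/-- extension of a finite vector by zero -/
def bhExt (N : ℕ) (v : Fin N → ℝ) : ℕ → ℝ := fun j => if h : j < N then v ⟨j, h⟩ else 0

lemma bhExt_add (N : ℕ) (v w : Fin N → ℝ) : bhExt N (v + w) = bhExt N v + bhExt N w := by
  funext j; by_cases h : j < N <;> simp [bhExt, h]

lemma bhExt_smul (N : ℕ) (c : ℝ) (v : Fin N → ℝ) : bhExt N (c • v) = c • bhExt N v := by
  funext j; by_cases h : j < N <;> simp [bhExt, h]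

lemma comp_update' {α β : Type*} {ι : Type*} [DecidableEq ι] (g : α → β) (f : ι → α)
    (i : ι) (v : α) :
    (fun k => g (Function.update f i v k)) = Function.update (fun k => g (f k)) i (g v) := by
  funext k
  rcases eq_or_ne k i with rfl | hk
  · simp
  · rw [Function.update_of_ne hk, Function.update_of_ne hk]

/-- the extremal form as a multilinear map on `(ℝ^N)^(n+1)` -/
def bhMap (n N : ℕ) : MultilinearMap ℝ (fun _ : Fin (n + 1) => (Fin N → ℝ)) ℝ where
  toFun x := bhB n (fun k => bhExt N (x k))
  map_update_add' := by
    intro inst x k v w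
    obtain rfl := Subsingleton.elim inst (instDecidableEqFin (n + 1))
    rw [comp_update', comp_update', comp_update', bhExt_add, bhB_add]
  map_update_smul' := by
    intro inst x k c v
    obtain rfl := Subsingleton.elim inst (instDecidableEqFin (n + 1))
    rw [comp_update', comp_update', bhExt_smul, smul_eq_mul, bhB_smul]

lemma bhMap_bound (n N : ℕ) (x : Fin (n + 1) → Fin N → ℝ) :
    ‖bhMap n N x‖ ≤ 2 ^ n * ∏ k, ‖x k‖ := by
  have : |bhB n (fun k => bhExt N (x k))| ≤ 2 ^ n * ∏ k, ‖x k‖ := by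
    refine bhB_bound n _ _ (fun k j => ?_)
    by_cases h : j < N
    · simp only [bhExt, dif_pos h]
      simpa using norm_le_pi_norm (x k) ⟨j, h⟩
    · simp only [bhExt, dif_neg h, abs_zero]
      exact norm_nonneg _
  simpa [bhMap] using this

/-- the extremal form as a continuous multilinear map -/
def bhT (n : ℕ) : ContinuousMultilinearMap ℝ (fun _ : Fin (n + 1) => (Fin (2 ^ n) → ℝ)) ℝ :=
  (bhMap n (2 ^ n)).mkContinuous (2 ^ n) (fun x => bhMap_bound n (2 ^ n) x)

lemma bhT_norm (n : ℕ) : ‖bhT n‖ ≤ 2 ^ n :=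
  MultilinearMap.mkContinuous_norm_le _ (by positivity) _

/-- Kronecker delta sequence -/
def bhD (j : ℕ) : ℕ → ℝ := fun i => if i = j then 1 else 0

/-- encoding of choices of signs into multi-indices -/
def bhEnc : (n : ℕ) → (Fin n → Bool × Bool) → Fin (n + 1) → ℕ
  | 0, _, _ => 0
  | n + 1, p, k =>
      if h : (k : ℕ) < n + 1 then
        2 * bhEnc n (fun i => p i.succ) ⟨k, h⟩ + (if (p 0).1 then 1 else 0)
      else if (p 0).2 then 1 else 0

lemma bhEnc_lt : ∀ (n : ℕ) (p : Fin n → Bool × Bool) (k : Fin (n + 1)),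
    bhEnc n p k < 2 ^ n := by
  intro n
  induction n with
  | zero => intro p k; simp [bhEnc]
  | succ n ih =>
    intro p k
    by_cases h : (k : ℕ) < n + 1
    · have := ih (fun i => p i.succ) ⟨k, h⟩
      simp only [bhEnc, dif_pos h]
      have h2 : (2:ℕ) ^ (n + 1) = 2 * 2 ^ n := by ring
      rcases (p 0).1 <;> simp <;> omega
    · have h2 : (1:ℕ) < 2 ^ (n + 1) := Nat.one_lt_two_pow (Nat.succ_ne_zero n)
      simp only [bhEnc, dif_neg h]
      rcases (p 0).2 <;> simp <;> omega

lemma bhEnc_castSucc (n : ℕ) (p : Fin (n + 1) → Bool × Bool) (k : Fin (n + 1)) :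
    bhEnc (n + 1) p k.castSucc =
      2 * bhEnc n (fun i => p i.succ) k + (if (p 0).1 then 1 else 0) := by
  have h : ((k.castSucc : Fin (n + 2)) : ℕ) < n + 1 := k.isLt
  simp [bhEnc, dif_pos h]
  intro h'; have := k.isLt; omega

lemma bhEnc_last (n : ℕ) (p : Fin (n + 1) → Bool × Bool) :
    bhEnc (n + 1) p (Fin.last (n + 1)) = if (p 0).2 then 1 else 0 := by
  simp [bhEnc]

lemma bhB_zero : ∀ (n : ℕ) (x : Fin (n + 1) → ℕ → ℝ) (k0 : Fin (n + 1)),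
    x k0 = 0 → bhB n x = 0 := by
  intro n
  induction n with
  | zero =>
    intro x k0 h
    have : k0 = 0 := Fin.fin_one_eq_zero k0
    subst this
    simp [bhB, h]
  | succ n ih =>
    intro x k0 h
    induction k0 using Fin.lastCases with
    | last => simp [bhB, h]
    | cast j =>
      have hE : bhEv (x j.castSucc) = 0 := by rw [h]; rfl
      have hO : bhOd (x j.castSucc) = 0 := by rw [h]; rfl
      have h1 : bhB n (fun k => bhEv (x k.castSucc)) = 0 := ih _ j hE
      have h2 : bhB n (fun k => bhOd (x k.castSucc)) = 0 := ih _ j hO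
      simp [bhB, h1, h2]

lemma bhEv_delta_even (b : ℕ) : bhEv (bhD (2 * b)) = bhD b := by
  funext i; simp only [bhEv, bhD]
  by_cases h : i = b
  · simp [h]
  · rw [if_neg (by omega), if_neg h]

lemma bhOd_delta_even (b : ℕ) : bhOd (bhD (2 * b)) = 0 := by
  funext i; simp only [bhOd, bhD]
  rw [if_neg (by omega)]; rfl

lemma bhEv_delta_odd (b : ℕ) : bhEv (bhD (2 * b + 1)) = 0 := by
  funext i; simp only [bhEv, bhD]
  rw [if_neg (by omega)]; rfl

lemma bhOd_delta_odd (b : ℕ) : bhOd (bhD (2 * b + 1)) = bhD b := by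
  funext i; simp only [bhOd, bhD]
  by_cases h : i = b
  · simp [h]
  · rw [if_neg (by omega), if_neg h]

lemma bhB_delta : ∀ (n : ℕ) (p : Fin n → Bool × Bool),
    |bhB n (fun k => bhD (bhEnc n p k))| = 1 := by
  intro n
  induction n with
  | zero => intro p; simp [bhB, bhEnc, bhD]
  | succ n ih =>
    intro p
    have h0 : bhB n (fun _ : Fin (n + 1) => (0 : ℕ → ℝ)) = 0 := bhB_zero n _ 0 rfl
    have key : bhB (n + 1) (fun k => bhD (bhEnc (n + 1) p k)) =
        bhB n (fun k => bhEv (bhD (bhEnc (n + 1) p k.castSucc))) *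
            (bhD (bhEnc (n + 1) p (Fin.last (n + 1))) 0 +
              bhD (bhEnc (n + 1) p (Fin.last (n + 1))) 1)
          + bhB n (fun k => bhOd (bhD (bhEnc (n + 1) p k.castSucc))) *
            (bhD (bhEnc (n + 1) p (Fin.last (n + 1))) 0 -
              bhD (bhEnc (n + 1) p (Fin.last (n + 1))) 1) := rfl
    rw [key, bhEnc_last]
    have hcs : ∀ k : Fin (n + 1), bhEnc (n + 1) p k.castSucc =
        2 * bhEnc n (fun i => p i.succ) k + (if (p 0).1 then 1 else 0) :=
      bhEnc_castSucc n p
    rcases hb : (p 0).1 <;> rcases hg : (p 0).2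
    · have hEfam : (fun k : Fin (n + 1) => bhEv (bhD (bhEnc (n + 1) p k.castSucc))) =
          (fun k => bhD (bhEnc n (fun i => p i.succ) k)) := by
        funext k; rw [hcs k, hb]; simp [bhEv_delta_even]
      have hOfam : (fun k : Fin (n + 1) => bhOd (bhD (bhEnc (n + 1) p k.castSucc))) =
          (fun _ => (0 : ℕ → ℝ)) := by
        funext k; rw [hcs k, hb]; simp [bhOd_delta_even]
      rw [hEfam, hOfam, h0]
      simpa [bhD, hg, abs_neg] using ih (fun i => p i.succ)
    · have hEfam : (fun k : Fin (n + 1) => bhEv (bhD (bhEnc (n + 1) p k.castSucc))) =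
          (fun k => bhD (bhEnc n (fun i => p i.succ) k)) := by
        funext k; rw [hcs k, hb]; simp [bhEv_delta_even]
      have hOfam : (fun k : Fin (n + 1) => bhOd (bhD (bhEnc (n + 1) p k.castSucc))) =
          (fun _ => (0 : ℕ → ℝ)) := by
        funext k; rw [hcs k, hb]; simp [bhOd_delta_even]
      rw [hEfam, hOfam, h0]
      simpa [bhD, hg, abs_neg] using ih (fun i => p i.succ)
    · have hEfam : (fun k : Fin (n + 1) => bhEv (bhD (bhEnc (n + 1) p k.castSucc))) =
          (fun _ => (0 : ℕ → ℝ)) := by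
        funext k; rw [hcs k, hb]; simp [bhEv_delta_odd]
      have hOfam : (fun k : Fin (n + 1) => bhOd (bhD (bhEnc (n + 1) p k.castSucc))) =
          (fun k => bhD (bhEnc n (fun i => p i.succ) k)) := by
        funext k; rw [hcs k, hb]; simp [bhOd_delta_odd]
      rw [hEfam, hOfam, h0]
      simpa [bhD, hg, abs_neg] using ih (fun i => p i.succ)
    · have hEfam : (fun k : Fin (n + 1) => bhEv (bhD (bhEnc (n + 1) p k.castSucc))) =
          (fun _ => (0 : ℕ → ℝ)) := by
        funext k; rw [hcs k, hb]; simp [bhEv_delta_odd]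
      have hOfam : (fun k : Fin (n + 1) => bhOd (bhD (bhEnc (n + 1) p k.castSucc))) =
          (fun k => bhD (bhEnc n (fun i => p i.succ) k)) := by
        funext k; rw [hcs k, hb]; simp [bhOd_delta_odd]
      rw [hEfam, hOfam, h0]
      simpa [bhD, hg, abs_neg] using ih (fun i => p i.succ)

lemma bhEnc_inj : ∀ (n : ℕ), Function.Injective (bhEnc n) := by
  intro n
  induction n with
  | zero =>
    intro p q _
    funext k
    exact absurd k.isLt (by omega)
  | succ n ih =>
    intro p q h
    have hg : (p 0).2 = (q 0).2 := by
      have := congrFun h (Fin.last (n + 1))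
      rw [bhEnc_last, bhEnc_last] at this
      rcases hp : (p 0).2 <;> rcases hq : (q 0).2 <;> simp [hp, hq] at this ⊢
    have hcs : ∀ k : Fin (n + 1),
        2 * bhEnc n (fun i => p i.succ) k + (if (p 0).1 then 1 else 0) =
        2 * bhEnc n (fun i => q i.succ) k + (if (q 0).1 then 1 else 0) := by
      intro k
      have := congrFun h k.castSucc
      rwa [bhEnc_castSucc, bhEnc_castSucc] at this
    have hbeq : (p 0).1 = (q 0).1 := by
      have := hcs 0
      rcases hp : (p 0).1 <;> rcases hq : (q 0).1 <;> simp [hp, hq] at this ⊢ <;> omega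
    have htail : (fun i : Fin n => p i.succ) = (fun i : Fin n => q i.succ) := by
      apply ih
      funext k
      have := hcs k
      rw [hbeq] at this
      omega
    funext k
    induction k using Fin.cases with
    | zero => exact Prod.ext hbeq hg
    | succ i => exact congrFun htail i

/-- encoding into `Fin`-valued multi-indices -/
def bhEncF (n : ℕ) (p : Fin n → Bool × Bool) (k : Fin (n + 1)) : Fin (2 ^ n) :=
  ⟨bhEnc n p k, bhEnc_lt n p k⟩

lemma bhEncF_inj (n : ℕ) : Function.Injective (bhEncF n) := by
  intro p q h
  apply bhEnc_inj n
  funext k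
  exact congrArg Fin.val (congrFun h k)

lemma bhExt_single (N : ℕ) (j : Fin N) : bhExt N (Pi.single j (1:ℝ)) = bhD (j : ℕ) := by
  funext i
  by_cases h : i < N
  · simp [bhExt, bhD, dif_pos h, Pi.single_apply, Fin.ext_iff]
  · have hj : i ≠ (j : ℕ) := by have := j.isLt; omega
    simp [bhExt, bhD, dif_neg h, hj]

lemma bhT_eval (n : ℕ) (p : Fin n → Bool × Bool) :
    |bhT n (fun k => Pi.single (bhEncF n p k) (1:ℝ))| = 1 := by
  have heq : bhT n (fun k => Pi.single (bhEncF n p k) (1:ℝ)) =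
      bhB n (fun k => bhD (bhEnc n p k)) := by
    show bhB n (fun k => bhExt (2 ^ n) (Pi.single (bhEncF n p k) (1:ℝ))) = _
    congr 1
    funext k
    exact bhExt_single (2 ^ n) (bhEncF n p k)
  rw [heq]
  exact bhB_delta n p

end BHLowerBound

/-- If the real `m`-linear Bohnenblust–Hille inequality holds with constant `C > 0`
for every `N` and every `m`-linear form on `(ℝ^N)^m` (sup norms), then
`C ≥ 2^((m-1)/m)`. -/
theorem stmt_10 (m : ℕ) (hm : 2 ≤ m) (C : ℝ) (hC : 0 < C)
    (hBH : ∀ N : ℕ, ∀ T : ContinuousMultilinearMap ℝ (fun _ : Fin m => (Fin N → ℝ)) ℝ,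
      (∑ idx : Fin m → Fin N,
          |T (fun k => Pi.single (idx k) (1 : ℝ))| ^ ((2 * m : ℝ) / (m + 1)))
        ^ (((m : ℝ) + 1) / (2 * m)) ≤ C * ‖T‖) :
    (2 : ℝ) ^ (((m : ℝ) - 1) / m) ≤ C := by
  obtain ⟨n, rfl⟩ : ∃ n, m = n + 1 := ⟨m - 1, by omega⟩
  set q : ℝ := (2 * ((n:ℝ) + 1)) / (((n:ℝ) + 1) + 1) with hq
  set e : ℝ := (((n:ℝ) + 1) + 1) / (2 * ((n:ℝ) + 1)) with he
  -- the sum is at least 4^n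
  have hterm : ∀ p : Fin n → Bool × Bool,
      |bhT n (fun k => Pi.single (bhEncF n p k) (1:ℝ))| ^ q = 1 := by
    intro p
    rw [bhT_eval n p, Real.one_rpow]
  have hsum : (4:ℝ) ^ n ≤ ∑ idx : Fin (n + 1) → Fin (2 ^ n),
      |bhT n (fun k => Pi.single (idx k) (1:ℝ))| ^ q := by
    have hcard : Fintype.card (Fin n → Bool × Bool) = 4 ^ n := by
      simp [Fintype.card_fun]
    calc (4:ℝ) ^ n = ∑ _p : Fin n → Bool × Bool, (1:ℝ) := by
          rw [Finset.sum_const, Finset.card_univ, hcard, nsmul_eq_mul, mul_one]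
          push_cast; ring
      _ = ∑ p : Fin n → Bool × Bool,
            |bhT n (fun k => Pi.single (bhEncF n p k) (1:ℝ))| ^ q := by
          exact Finset.sum_congr rfl (fun p _ => (hterm p).symm)
      _ = ∑ idx ∈ Finset.univ.image (bhEncF n),
            |bhT n (fun k => Pi.single (idx k) (1:ℝ))| ^ q := by
          rw [Finset.sum_image (fun p _ p' _ h => bhEncF_inj n h)]
      _ ≤ ∑ idx : Fin (n + 1) → Fin (2 ^ n),
            |bhT n (fun k => Pi.single (idx k) (1:ℝ))| ^ q := by
          refine Finset.sum_le_sum_of_subset_of_nonneg (Finset.subset_univ _)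
            (fun i _ _ => Real.rpow_nonneg (abs_nonneg _) _)
  -- apply the Bohnenblust–Hille hypothesis to `bhT n`
  have hmain := hBH (2 ^ n) (bhT n)
  have hqm : ((2 * ((n+1:ℕ)) : ℝ) / (((n+1:ℕ)) + 1)) = q := by push_cast [hq]; ring_nf
  have hem : ((((n+1:ℕ):ℝ) + 1) / (2 * ((n+1:ℕ)))) = e := by push_cast [he]; ring_nf
  rw [hqm, hem] at hmain
  have hepos : 0 < e := by rw [he]; positivity
  have h1 : ((4:ℝ) ^ n) ^ e ≤ C * 2 ^ n := by
    calc ((4:ℝ) ^ n) ^ e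
        ≤ (∑ idx : Fin (n + 1) → Fin (2 ^ n),
            |bhT n (fun k => Pi.single (idx k) (1:ℝ))| ^ q) ^ e :=
          Real.rpow_le_rpow (by positivity) hsum hepos.le
      _ ≤ C * ‖bhT n‖ := hmain
      _ ≤ C * 2 ^ n := mul_le_mul_of_nonneg_left (bhT_norm n) hC.le
  -- rewrite everything as powers of 2
  have h4 : ((4:ℝ) ^ n) ^ e = (2:ℝ) ^ ((2 * (n:ℝ)) * e) := by
    rw [show (4:ℝ) ^ n = (2:ℝ) ^ (2 * n : ℕ) by rw [pow_mul]; norm_num,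
      ← Real.rpow_natCast (2:ℝ) (2 * n), ← Real.rpow_mul (by norm_num : (0:ℝ) ≤ 2)]
    push_cast
    ring_nf
  have h2n : (2:ℝ) ^ n = (2:ℝ) ^ ((n:ℝ)) := (Real.rpow_natCast 2 n).symm
  rw [h4, h2n] at h1
  have h2 : (2:ℝ) ^ ((2 * (n:ℝ)) * e - (n:ℝ)) ≤ C := by
    rw [Real.rpow_sub (by norm_num : (0:ℝ) < 2), div_le_iff₀ (by positivity)]
    exact h1
  have hexp : (((n+1:ℕ):ℝ) - 1) / ((n+1:ℕ):ℝ) = (2 * (n:ℝ)) * e - (n:ℝ) := by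
    have hn1 : ((n:ℝ) + 1) ≠ 0 := by positivity
    rw [he]
    push_cast
    field_simp
    ring
  rw [hexp]
  exact h2
end

section
/- The optimal constant C₂ in the real Littlewood 4/3 inequality for bilinear forms — the smallest C such that (Σ_{i,j=1}^{N} |T(e_i,e_j)|^{4/3})^{3/4} ≤ C·‖T‖ for all N and all bilinear T : ℝ^N × ℝ^N → ℝ with sup norms — satisfies C₂ ≥ √2. -/
noncomputable def Tlit : ContinuousMultilinearMap ℝ (fun _ : Fin 2 => (Fin 2 → ℝ)) ℝ :=
  MultilinearMap.mkContinuous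
    { toFun := fun v => v 0 0 * v 1 0 + v 0 0 * v 1 1 + v 0 1 * v 1 0 - v 0 1 * v 1 1
      map_update_add' := by
        intro _ m i x y
        fin_cases i <;> simp [Function.update] <;> ring
      map_update_smul' := by
        intro _ m i c x
        fin_cases i <;> simp [Function.update] <;> ring }
    2
    (by
      intro v
      simp only [MultilinearMap.coe_mk, Fin.prod_univ_two, Real.norm_eq_abs]
      have hx0 : |v 0 0| ≤ ‖v 0‖ := by
        have := norm_le_pi_norm (v 0) 0; simpa [Real.norm_eq_abs] using this
      have hx1 : |v 0 1| ≤ ‖v 0‖ := by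
        have := norm_le_pi_norm (v 0) 1; simpa [Real.norm_eq_abs] using this
      have hy0 : |v 1 0| ≤ ‖v 1‖ := by
        have := norm_le_pi_norm (v 1) 0; simpa [Real.norm_eq_abs] using this
      have hy1 : |v 1 1| ≤ ‖v 1‖ := by
        have := norm_le_pi_norm (v 1) 1; simpa [Real.norm_eq_abs] using this
      set x0 := v 0 0; set x1 := v 0 1; set y0 := v 1 0; set y1 := v 1 1
      have key : |y0 + y1| + |y0 - y1| ≤ 2 * ‖v 1‖ := by
        rcases abs_cases (y0 + y1) with ⟨h1, _⟩ | ⟨h1, _⟩ <;>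
          rcases abs_cases (y0 - y1) with ⟨h2, _⟩ | ⟨h2, _⟩ <;>
          rcases abs_cases y0 with ⟨h3, _⟩ | ⟨h3, _⟩ <;>
          rcases abs_cases y1 with ⟨h4, _⟩ | ⟨h4, _⟩ <;> linarith
      have h1 : |x0 * y0 + x0 * y1 + x1 * y0 - x1 * y1|
          ≤ |x0| * |y0 + y1| + |x1| * |y0 - y1| := by
        have : x0 * y0 + x0 * y1 + x1 * y0 - x1 * y1 = x0 * (y0 + y1) + x1 * (y0 - y1) := by
          ring
        rw [this]
        calc |x0 * (y0 + y1) + x1 * (y0 - y1)| ≤ |x0 * (y0 + y1)| + |x1 * (y0 - y1)| :=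
              abs_add_le _ _
          _ = |x0| * |y0 + y1| + |x1| * |y0 - y1| := by rw [abs_mul, abs_mul]
      have h2 : |x0| * |y0 + y1| + |x1| * |y0 - y1| ≤ ‖v 0‖ * (|y0 + y1| + |y0 - y1|) := by
        have a1 := abs_nonneg (y0 + y1)
        have a2 := abs_nonneg (y0 - y1)
        nlinarith
      have h3 : ‖v 0‖ * (|y0 + y1| + |y0 - y1|) ≤ ‖v 0‖ * (2 * ‖v 1‖) := by
        exact mul_le_mul_of_nonneg_left key (norm_nonneg _)
      calc |x0 * y0 + x0 * y1 + x1 * y0 - x1 * y1| ≤ ‖v 0‖ * (2 * ‖v 1‖) := by linarith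
        _ = 2 * (‖v 0‖ * ‖v 1‖) := by ring)

/-- Any constant valid in the real Littlewood 4/3 inequality for all bilinear forms
(in particular the optimal one) is at least `√2`. -/
theorem stmt_11 (C : ℝ)
    (hC : ∀ N : ℕ, ∀ T : ContinuousMultilinearMap ℝ (fun _ : Fin 2 => (Fin N → ℝ)) ℝ,
      (∑ i : Fin N, ∑ j : Fin N,
          |T ![Pi.single i (1 : ℝ), Pi.single j (1 : ℝ)]| ^ ((4 : ℝ) / 3)) ^ ((3 : ℝ) / 4)
        ≤ C * ‖T‖) :
    Real.sqrt 2 ≤ C := by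
  have h := hC 2 Tlit
  have hval : (∑ i : Fin 2, ∑ j : Fin 2,
      |Tlit ![Pi.single i (1 : ℝ), Pi.single j (1 : ℝ)]| ^ ((4 : ℝ) / 3)) = 4 := by
    rw [Fin.sum_univ_two, Fin.sum_univ_two, Fin.sum_univ_two]
    have e : ∀ i j : Fin 2, Tlit ![Pi.single i (1 : ℝ), Pi.single j (1 : ℝ)]
        = Pi.single (M := fun _ : Fin 2 => ℝ) i 1 0 * Pi.single (M := fun _ : Fin 2 => ℝ) j 1 0
          + Pi.single (M := fun _ : Fin 2 => ℝ) i 1 0 * Pi.single (M := fun _ : Fin 2 => ℝ) j 1 1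
          + Pi.single (M := fun _ : Fin 2 => ℝ) i 1 1 * Pi.single (M := fun _ : Fin 2 => ℝ) j 1 0
          - Pi.single (M := fun _ : Fin 2 => ℝ) i 1 1 * Pi.single (M := fun _ : Fin 2 => ℝ) j 1 1 := by
      intro i j
      rfl
    rw [e, e, e, e]
    norm_num [Pi.single_apply, Real.one_rpow]
  have hnorm : ‖Tlit‖ ≤ 2 :=
    MultilinearMap.mkContinuous_norm_le _ (by norm_num) _
  rw [hval] at h
  have h4 : (4 : ℝ) ^ ((3 : ℝ) / 4) = 2 * Real.sqrt 2 := by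
    have h2 : (2 : ℝ) ^ (2 : ℝ) = 4 := by
      rw [show (2:ℝ) = ((2:ℕ):ℝ) from by norm_num, Real.rpow_natCast]
      norm_num
    nth_rewrite 1 [← h2]
    rw [← Real.rpow_mul (by norm_num : (0:ℝ) ≤ 2)]
    rw [show (2:ℝ) * (3/4) = 1 + 1/2 by norm_num, Real.rpow_add (by norm_num), Real.rpow_one]
    rw [Real.sqrt_eq_rpow]
  rw [h4] at h
  have hs : (0:ℝ) < Real.sqrt 2 := Real.sqrt_pos.mpr (by norm_num)
  have hCpos : 0 < C := by
    by_contra hc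
    push_neg at hc
    have : C * ‖Tlit‖ ≤ 0 := mul_nonpos_of_nonpos_of_nonneg hc (norm_nonneg _)
    nlinarith
  have : 2 * Real.sqrt 2 ≤ C * 2 := by
    calc 2 * Real.sqrt 2 ≤ C * ‖Tlit‖ := h
      _ ≤ C * 2 := mul_le_mul_of_nonneg_left hnorm hCpos.le
  linarith
end

section
/- For the inductively defined m-linear forms T_m on (ℝ^{2^{m−1}})^m, there exist vectors x₁,…,x_m with ‖x₁‖_∞ = ⋯ = ‖x_m‖_∞ = 1 such that T_m(x₁,…,x_m) = 2^{m−1}; specifically one may take x_k with k-th coordinate entries x_k^j = 1 for 1 ≤ j ≤ m (and the remaining entries chosen in {−1, 0, 1} so that the sup norm is 1). -/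
lemma Tm_indicator (m : ℕ) (hm : 2 ≤ m) :
    ∀ n, n + 2 ≤ m →
      Tm (n + 2) (fun _ i => if i < m then (1 : ℝ) else 0) = 2 ^ (n + 1) := by
  intro n
  induction n with
  | zero =>
      intro _
      have h0 : (0 : ℕ) < m := by omega
      have h1 : (1 : ℕ) < m := by omega
      simp [Tm, if_pos h0, if_pos h1]
      norm_num
  | succ n ih =>
      intro h
      have h0 : (0 : ℕ) < m := by omega
      have h1 : (1 : ℕ) < m := by omega
      show Tm (n + 3) _ = _
      rw [Tm, ih (by omega)]
      simp only [if_pos h0, if_pos h1]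
      ring

/-- There are norm-one vectors `x₁, …, x_m`, with first `m` coordinates equal to `1`
and remaining entries in `{-1, 0, 1}`, at which `T_m` attains the value `2^(m-1)`. -/
theorem stmt_13 (m : ℕ) (hm : 2 ≤ m) :
    ∃ x : ℕ → ℕ → ℝ,
      (∀ k < m, ∀ i, 2 ^ (m - 1) ≤ i → x k i = 0) ∧
      (∀ k < m, ∀ i, x k i = -1 ∨ x k i = 0 ∨ x k i = 1) ∧
      (∀ k < m, ∀ i, |x k i| ≤ 1) ∧
      (∀ k < m, ∀ j < m, x k j = 1) ∧
      Tm m x = 2 ^ (m - 1) := by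
  have hpow : m ≤ 2 ^ (m - 1) := by
    have := Nat.lt_two_pow_self (n := m - 1)
    omega
  refine ⟨fun _ i => if i < m then 1 else 0, ?_, ?_, ?_, ?_, ?_⟩
  · intro k _ i hi
    exact if_neg (by omega)
  · intro k _ i
    by_cases h : i < m <;> simp [h]
  · intro k _ i
    by_cases h : i < m <;> simp [h]
  · intro k _ j hj
    exact if_pos hj
  · obtain ⟨n, rfl⟩ : ∃ n, m = n + 2 := ⟨m - 2, by omega⟩
    have := Tm_indicator (n + 2) hm n le_rfl
    simpa using this
end

section
/- The trilinear map T₃(x,y,z) = (z₁+z₂)(x₁y₁+x₁y₂+x₂y₁−x₂y₂) + (z₁−z₂)(x₃y₃+x₃y₄+x₄y₃−x₄y₄) satisfies |T₃(x,y,z)| ≤ 4‖x‖_∞‖y‖_∞‖z‖_∞ for all x,y,z ∈ ℝ⁴, and T₃(e₁+e₂+e₃, e₁+e₂+e₃, e₁+e₂+e₃) = 4. -/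
/-- The trilinear form `T₃` on `(ℝ⁴)³`. -/
def T3 (x y z : Fin 4 → ℝ) : ℝ :=
  (z 0 + z 1) * (x 0 * y 0 + x 0 * y 1 + x 1 * y 0 - x 1 * y 1)
    + (z 0 - z 1) * (x 2 * y 2 + x 2 * y 3 + x 3 * y 2 - x 3 * y 3)

lemma aux_pair (y0 y1 b : ℝ) (hy0 : |y0| ≤ b) (hy1 : |y1| ≤ b) :
    |y0 + y1| + |y0 - y1| ≤ 2 * b := by
  obtain ⟨h0, h0'⟩ := abs_le.mp hy0
  obtain ⟨h1, h1'⟩ := abs_le.mp hy1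
  rcases abs_cases (y0 + y1) with ⟨e, _⟩ | ⟨e, _⟩ <;>
  rcases abs_cases (y0 - y1) with ⟨f, _⟩ | ⟨f, _⟩ <;> rw [e, f] <;> linarith

lemma aux_B (x0 x1 y0 y1 a b : ℝ) (hx0 : |x0| ≤ a) (hx1 : |x1| ≤ a)
    (hy0 : |y0| ≤ b) (hy1 : |y1| ≤ b) :
    |x0 * y0 + x0 * y1 + x1 * y0 - x1 * y1| ≤ 2 * a * b := by
  have ha : 0 ≤ a := (abs_nonneg x0).trans hx0
  have h : x0 * y0 + x0 * y1 + x1 * y0 - x1 * y1 = x0 * (y0 + y1) + x1 * (y0 - y1) := by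
    ring
  rw [h]
  calc |x0 * (y0 + y1) + x1 * (y0 - y1)| ≤ |x0 * (y0 + y1)| + |x1 * (y0 - y1)| :=
        abs_add_le _ _
    _ = |x0| * |y0 + y1| + |x1| * |y0 - y1| := by rw [abs_mul, abs_mul]
    _ ≤ a * |y0 + y1| + a * |y0 - y1| := by
        gcongr
    _ = a * (|y0 + y1| + |y0 - y1|) := by ring
    _ ≤ a * (2 * b) := by
        have := aux_pair y0 y1 b hy0 hy1
        nlinarith
    _ = 2 * a * b := by ring

/-- `|T₃(x,y,z)| ≤ 4‖x‖‖y‖‖z‖` for the sup norms, and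
`T₃(e₁+e₂+e₃, e₁+e₂+e₃, e₁+e₂+e₃) = 4`. -/
theorem stmt_15 :
    (∀ x y z : Fin 4 → ℝ, |T3 x y z| ≤ 4 * ‖x‖ * ‖y‖ * ‖z‖) ∧
    T3 (Pi.single 0 1 + Pi.single 1 1 + Pi.single 2 1)
       (Pi.single 0 1 + Pi.single 1 1 + Pi.single 2 1)
       (Pi.single 0 1 + Pi.single 1 1 + Pi.single 2 1) = 4 := by
  constructor
  · intro x y z
    have hx : ∀ i, |x i| ≤ ‖x‖ := fun i => by
      simpa [Real.norm_eq_abs] using norm_le_pi_norm x i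
    have hy : ∀ i, |y i| ≤ ‖y‖ := fun i => by
      simpa [Real.norm_eq_abs] using norm_le_pi_norm y i
    have hz : ∀ i, |z i| ≤ ‖z‖ := fun i => by
      simpa [Real.norm_eq_abs] using norm_le_pi_norm z i
    have hB1 := aux_B (x 0) (x 1) (y 0) (y 1) ‖x‖ ‖y‖ (hx 0) (hx 1) (hy 0) (hy 1)
    have hB2 := aux_B (x 2) (x 3) (y 2) (y 3) ‖x‖ ‖y‖ (hx 2) (hx 3) (hy 2) (hy 3)
    have hzz := aux_pair (z 0) (z 1) ‖z‖ (hz 0) (hz 1)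
    have habs1 := abs_nonneg (z 0 + z 1)
    have habs2 := abs_nonneg (z 0 - z 1)
    have hxy : (0:ℝ) ≤ 2 * ‖x‖ * ‖y‖ := by positivity
    calc |T3 x y z| ≤ |(z 0 + z 1) * (x 0 * y 0 + x 0 * y 1 + x 1 * y 0 - x 1 * y 1)|
          + |(z 0 - z 1) * (x 2 * y 2 + x 2 * y 3 + x 3 * y 2 - x 3 * y 3)| := abs_add_le _ _
      _ = |z 0 + z 1| * |x 0 * y 0 + x 0 * y 1 + x 1 * y 0 - x 1 * y 1|
          + |z 0 - z 1| * |x 2 * y 2 + x 2 * y 3 + x 3 * y 2 - x 3 * y 3| := by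
            rw [abs_mul, abs_mul]
      _ ≤ |z 0 + z 1| * (2 * ‖x‖ * ‖y‖) + |z 0 - z 1| * (2 * ‖x‖ * ‖y‖) := by
            gcongr
      _ = (|z 0 + z 1| + |z 0 - z 1|) * (2 * ‖x‖ * ‖y‖) := by ring
      _ ≤ (2 * ‖z‖) * (2 * ‖x‖ * ‖y‖) := by gcongr
      _ = 4 * ‖x‖ * ‖y‖ * ‖z‖ := by ring
  · norm_num [T3, Pi.single_apply, Fin.ext_iff]
end
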